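/- arXiv:1704.01836 — 4 statements merged into one kernel-verified Lean document; each statement's English description precedes it below -/
import Mathlib

section
/- Let X be a pure k-dimensional simplicial complex and let S be an independent set of X with |S| ≥ k. Define Y^S indexed by k-subsets of V by (Y^S)_{F,F'} = (L↓_{k-1})_{F,F'} if F ∪ F' ⊆ S and 0 otherwise. Then Y^S is positive semidefinite, ⟨Y^S, I⟩ = k·binom(|S|, k), and ⟨Y^S, L↓_{k-1}⟩ = k·binom(|S|, k)·|S|. -/
open Finset Matrix

/-- The oriented incidence number `[F:K]` induced by the global linear order on
the vertices: it is `(-1)^j` if `K ⊆ F`, `F ∖ K = {x_j}` and `x_j` is the `j`-th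
smallest element of `F`, and `0` otherwise. -/
def inc {V : Type} [DecidableEq V] [LinearOrder V] (F K : Finset V) : ℝ :=
  if K ⊆ F ∧ F.card = K.card + 1 then
    ∑ x ∈ F \ K, (-1 : ℝ) ^ (K.filter (fun y => y < x)).card
  else 0

/-- An abstract simplicial complex on a vertex type `V`: a family of finite subsets
of `V` closed under taking subsets. -/
structure SC (V : Type) [DecidableEq V] where
  faces : Finset (Finset V)
  down_closed : ∀ ⦃F⦄, F ∈ faces → ∀ ⦃K : Finset V⦄, K ⊆ F → K ∈ faces

variable {V : Type} [Fintype V] [DecidableEq V] [LinearOrder V]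

/-- The faces of cardinality `m` (i.e. of dimension `m-1`) of a complex. -/
def SC.dfaces (X : SC V) (m : ℕ) : Finset (Finset V) := X.faces.filter fun F => F.card = m

/-- The faces of cardinality `m`, as a type (index set of the space `C^{m-1}` of
`(m-1)`-dimensional cochains). -/
abbrev Face (X : SC V) (m : ℕ) := {F : Finset V // F ∈ X.dfaces m}

/-- The matrix of the coboundary map `δ_{m-1}` from `(m-1)`-dimensional cochains
(functions on cardinality-`m` faces) to `m`-dimensional cochains, in the bases of
elementary cochains. -/
def deltaMat (X : SC V) (m : ℕ) : Matrix (Face X (m + 1)) (Face X m) ℝ :=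
  fun H F => inc H.1 F.1

/-- The up-Laplacian `L↑_{m-1} = ∂_m δ_{m-1}` acting on `(m-1)`-dimensional cochains,
where `∂ = δ*` is the adjoint (transpose) of the coboundary map. -/
def Lup (X : SC V) (m : ℕ) : Matrix (Face X m) (Face X m) ℝ :=
  (deltaMat X m)ᵀ * deltaMat X m

/-- The down-Laplacian `L↓_m = δ_{m-1} ∂_m` acting on `m`-dimensional cochains. -/
def Ldown (X : SC V) (m : ℕ) : Matrix (Face X (m + 1)) (Face X (m + 1)) ℝ :=
  deltaMat X m * (deltaMat X m)ᵀ

/-- The space of harmonicSp `i`-cochains `H_i = Z_i ∩ Z^i = ker ∂_i ∩ ker δ_i`. -/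
def harmonicSp (X : SC V) (i : ℕ) : Submodule ℝ (Face X (i + 1) → ℝ) :=
  LinearMap.ker (Matrix.mulVecLin (deltaMat X i)ᵀ) ⊓
    LinearMap.ker (Matrix.mulVecLin (deltaMat X (i + 1)))

/-- The type of all `k`-element subsets of `V`. -/
abbrev KSet (V : Type) [Fintype V] [DecidableEq V] (k : ℕ) := {F : Finset V // F.card = k}

/-- `ε_{F,F'} = [F : F ∩ F'] ⬝ [F' : F ∩ F']`. -/
def eps {V : Type} [DecidableEq V] [LinearOrder V] (F F' : Finset V) : ℝ :=
  inc F (F ∩ F') * inc F' (F ∩ F')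

/-- The down-Laplacian `L↓_{k-1}` of the complete complex `K_n^k`, as a matrix indexed
by all `k`-subsets of the vertex set: diagonal entries `k`, off-diagonal entries
`ε_{F,F'}` (which vanish unless `|F ∩ F'| = k-1`). -/
def Lc (V : Type) [Fintype V] [DecidableEq V] [LinearOrder V] (k : ℕ) :
    Matrix (KSet V k) (KSet V k) ℝ :=
  fun F F' => if F = F' then (k : ℝ) else eps F.1 F'.1

/-- `S` is an independent set of the pure `k`-dimensional complex `X`: it contains
no `k`-dimensional face of `X`. -/
def SC.IsIndep (X : SC V) (k : ℕ) (S : Finset V) : Prop :=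
  ∀ H ∈ X.dfaces (k + 1), ¬ H ⊆ S

/-- The independence number `α(X)` of a pure `k`-dimensional complex. -/
noncomputable def alphaNum (X : SC V) (k : ℕ) : ℕ :=
  sSup {m | ∃ S : Finset V, X.IsIndep k S ∧ S.card = m}

/-- `X` is a pure `k`-dimensional simplicial complex: all faces have dimension at
most `k` and every face is contained in a face of dimension `k`. -/
def SC.Pure (X : SC V) (k : ℕ) : Prop :=
  (∀ F ∈ X.faces, F.card ≤ k + 1) ∧ ∀ F ∈ X.faces, ∃ H ∈ X.dfaces (k + 1), F ⊆ H

/-- Feasibility for the primal semidefinite program defining `ϑ_k(X)`. -/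
def thetaFeasible (X : SC V) (k : ℕ) (Y : Matrix (KSet V k) (KSet V k) ℝ) : Prop :=
  Y.PosSemidef ∧ Matrix.trace Y = 1 ∧
  (∀ F F' : KSet V k, F.1 ∪ F'.1 ∈ X.dfaces (k + 1) → Y F F' = 0) ∧
  (∀ F F' : KSet V k, k + 2 ≤ (F.1 ∪ F'.1).card → Y F F' = 0) ∧
  (∀ F F' G G' : KSet V k, F.1 ∪ F'.1 = G.1 ∪ G'.1 →
    eps F.1 F'.1 * Y F F' = eps G.1 G'.1 * Y G G')

/-- The theta number `ϑ_k(X)` of a pure `k`-dimensional simplicial complex: the optimal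
value of the semidefinite program maximizing `⟨L↓_{k-1}, Y⟩` over feasible `Y`. -/
noncomputable def theta (X : SC V) (k : ℕ) : ℝ :=
  sSup {t | ∃ Y, thetaFeasible X k Y ∧ Matrix.trace (Lc V k * Y) = t}

/-- The complete `k`-dimensional complex on the vertex type `V`: all subsets of
cardinality at most `k+1` are faces. -/
def completeComplex (V : Type) [Fintype V] [DecidableEq V] (k : ℕ) : SC V :=
  ⟨univ.filter fun F => F.card ≤ k + 1, by
    intro F hF K hK
    simp only [mem_filter, mem_univ, true_and] at hF ⊢
    exact le_trans (card_le_card hK) hF⟩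

/-- The empty complex (no faces at all), conventionally pure of any dimension. -/
def emptyComplex (V : Type) [DecidableEq V] : SC V :=
  ⟨∅, by intro F hF; simp at hF⟩

/-- The largest eigenvalue of a matrix. -/
noncomputable def lambdaMax {ι : Type} [Fintype ι] (M : Matrix ι ι ℝ) : ℝ :=
  sSup {μ : ℝ | Module.End.HasEigenvalue (Matrix.mulVecLin M) μ}

/-- The smallest eigenvalue of a matrix. -/
noncomputable def lambdaMin {ι : Type} [Fintype ι] (M : Matrix ι ι ℝ) : ℝ :=
  sInf {μ : ℝ | Module.End.HasEigenvalue (Matrix.mulVecLin M) μ}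

/-- The degree of a face `F`: the number of faces of one higher dimension containing it. -/
def SC.deg (X : SC V) (F : Finset V) : ℕ :=
  ((X.dfaces (F.card + 1)).filter fun H => F ⊆ H).card

/-- The minimal degree of a `(k-1)`-dimensional face (a face of cardinality `k`). -/
noncomputable def degMin (X : SC V) (k : ℕ) : ℕ :=
  sInf {m | ∃ F ∈ X.dfaces k, m = X.deg F}

/-- The up-Laplacian `L↑_{k-1}(X)` extended by zeros to a matrix indexed by all
`k`-subsets of the vertex set. -/
def LupE (X : SC V) (k : ℕ) : Matrix (KSet V k) (KSet V k) ℝ :=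
  fun F F' => ∑ H ∈ X.dfaces (k + 1), inc H F.1 * inc H F'.1

/-- The down-Laplacian `L↓_{k-1}(X)` extended by zeros to a matrix indexed by all
`k`-subsets of the vertex set. -/
def LdownE (X : SC V) (k : ℕ) : Matrix (KSet V k) (KSet V k) ℝ :=
  fun F F' =>
    if F.1 ∈ X.faces ∧ F'.1 ∈ X.faces then ∑ K ∈ X.dfaces (k - 1), inc F.1 K * inc F'.1 K
    else 0

/-- The Lovász theta number of a graph given by an adjacency relation `adj` on a finite
vertex type, in its primal formulation. -/
noncomputable def thetaG {W : Type} [Fintype W] (adj : W → W → Prop) : ℝ :=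
  sSup {t | ∃ Z : Matrix W W ℝ, Z.PosSemidef ∧ Matrix.trace Z = 1 ∧
    (∀ v w, adj v w → Z v w = 0) ∧ t = ∑ v, ∑ w, Z v w}

/-!
Writing `L↓_{k-1} = ∂ ∂ᵀ` with the boundary matrix `∂` of the complete complex, `Y^S = D L↓ D`
for the diagonal 0/1 matrix `D` selecting the `k`-subsets of `S`, so `Y^S` is positive
semidefinite. Its diagonal is `k` on the `binom(|S|, k)` subsets of `S`. Finally `⟨Y^S, L↓⟩` is the
sum of the squared entries of `L↓` over pairs of `k`-subsets of `S`; the row of `F ⊆ S` contributes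
`k²` from the diagonal and `1` for each of the `k (|S| - k)` subsets of `S` meeting `F` in `k - 1`
points, `k |S|` in total.
-/

lemma card_filter_card_inter_add_one {α : Type*} [DecidableEq α] {S F : Finset α} (hFS : F ⊆ S) :
    #{G ∈ S.powersetCard #F | #(F ∩ G) + 1 = #F} = #F * (#S - #F) := by
  rw [← card_sdiff_of_subset hFS, ← card_product]
  symm
  refine card_nbij (fun p => insert p.2 (F.erase p.1)) ?_ ?_ ?_
  · rintro ⟨x, y⟩ hp
    simp only [coe_product, Set.mem_prod, mem_coe, mem_sdiff] at hp
    obtain ⟨hx, hyS, hyF⟩ := hp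
    have hinter : F ∩ insert y (F.erase x) = F.erase x := by
      rw [inter_comm, insert_inter_of_notMem hyF, inter_eq_left.mpr (erase_subset x F)]
    simp only [coe_filter, mem_powersetCard, Set.mem_ofPred_eq, hinter, card_erase_add_one hx,
      and_true]
    refine ⟨insert_subset hyS ((erase_subset x F).trans hFS), ?_⟩
    rw [card_insert_of_notMem fun h => hyF (mem_of_mem_erase h), card_erase_add_one hx]
  · rintro ⟨x, y⟩ hp ⟨x', y'⟩ hp' heq
    simp only [coe_product, Set.mem_prod, mem_coe, mem_sdiff] at hp hp' heq
    have hy : y = y' := by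
      rcases mem_insert.mp (heq ▸ mem_insert_self y (F.erase x)) with h | h
      · exact h
      · exact absurd (mem_of_mem_erase h) hp.2.2
    subst hy
    have hx : F.erase x = F.erase x' := by
      simpa [insert_inter_of_notMem hp.2.2, inter_eq_left.mpr (erase_subset _ F)] using
        congrArg (· ∩ F) heq
    rw [erase_injOn F hp.1 hp'.1 hx]
  · intro G hG
    simp only [coe_filter, mem_powersetCard, Set.mem_ofPred_eq] at hG
    obtain ⟨⟨hGS, hGc⟩, hI⟩ := hG
    obtain ⟨x, hxI, hFx⟩ := exists_eq_insert_iff.mpr ⟨(inter_subset_left : F ∩ G ⊆ F), hI⟩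
    obtain ⟨y, hyI, hGy⟩ :=
      exists_eq_insert_iff.mpr ⟨(inter_subset_right : F ∩ G ⊆ G), hI.trans hGc.symm⟩
    have hyF : y ∉ F := fun h => hyI (mem_inter.mpr ⟨h, hGy ▸ mem_insert_self y _⟩)
    refine ⟨(x, y), ?_, ?_⟩
    · simp only [coe_product, Set.mem_prod, mem_coe, mem_sdiff]
      exact ⟨hFx ▸ mem_insert_self x _, hGS (hGy ▸ mem_insert_self y _), hyF⟩
    · show insert y (F.erase x) = G
      rw [← hFx, erase_insert hxI, hGy]

lemma sum_ite_subset_eq_sum_powersetCard {α : Type} [Fintype α] [DecidableEq α] {k : ℕ}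
    (S : Finset α) (f : Finset α → ℝ) :
    ∑ F : KSet α k, (if F.1 ⊆ S then f F.1 else 0) = ∑ G ∈ S.powersetCard k, f G := by
  have hfilter : {G ∈ (univ : Finset α).powersetCard k | G ⊆ S} = S.powersetCard k := by
    ext G
    simp only [mem_filter, mem_powersetCard, subset_univ, true_and, and_comm]
  rw [← hfilter, sum_filter, sum_subtype _ (fun _ => mem_powersetCard_univ)]

section IncidenceSums

variable {α : Type} [DecidableEq α] [LinearOrder α]

lemma inc_ne_zero {F K : Finset α} (h : inc F K ≠ 0) : K ⊆ F ∧ #F = #K + 1 := by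
  by_contra hc
  exact h (if_neg hc)

lemma inc_sq {F K : Finset α} (hKF : K ⊆ F) (hc : #F = #K + 1) : inc F K ^ 2 = 1 := by
  obtain ⟨x, hx⟩ : ∃ x, F \ K = {x} := card_eq_one.mp (by rw [card_sdiff_of_subset hKF]; omega)
  rw [inc, if_pos ⟨hKF, hc⟩, hx, sum_singleton, ← pow_mul, mul_comm, pow_mul, neg_one_sq, one_pow]

lemma eps_sq {k : ℕ} {F F' : Finset α} (hF : #F = k) (hF' : #F' = k) :
    eps F F' ^ 2 = if #(F ∩ F') + 1 = k then 1 else 0 := by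
  split_ifs with h
  · rw [eps, mul_pow, inc_sq inter_subset_left (by omega), inc_sq inter_subset_right (by omega),
      one_mul]
  · rw [eps, inc, if_neg (fun hc => h (by omega)), zero_mul, sq, zero_mul]

lemma sum_inc_sq [Fintype α] (F : Finset α) : ∑ K, inc F K ^ 2 = #F := by
  have hzero : ∀ K ∈ univ, K ∉ F.image F.erase → inc F K ^ 2 = 0 := by
    intro K _ hK
    by_contra hne
    obtain ⟨hKF, hc⟩ := inc_ne_zero (left_ne_zero_of_mul (sq (inc F K) ▸ hne))
    obtain ⟨x, hxK, rfl⟩ := exists_eq_insert_iff.mpr ⟨hKF, hc.symm⟩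
    exact hK (mem_image.mpr ⟨x, mem_insert_self x K, erase_insert hxK⟩)
  rw [← sum_subset (subset_univ _) hzero, sum_image (erase_injOn F)]
  rw [sum_congr rfl fun x hx => inc_sq (erase_subset x F) (card_erase_add_one hx).symm]
  simp

lemma sum_inc_mul_inc_of_ne [Fintype α] {F F' : Finset α} (hcard : #F = #F') (hne : F ≠ F') :
    ∑ K, inc F K * inc F' K = eps F F' := by
  have hlt : #(F ∩ F') < #F := by
    refine (card_le_card inter_subset_left).lt_of_ne fun h => hne ?_
    have hsub : F ⊆ F' := eq_of_subset_of_card_le inter_subset_left h.ge ▸ inter_subset_right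
    exact eq_of_subset_of_card_le hsub hcard.ge
  refine sum_eq_single (F ∩ F') (fun K _ hK => ?_) (by simp)
  by_contra h0
  obtain ⟨hKF, hc⟩ := inc_ne_zero (left_ne_zero_of_mul h0)
  have hKF' := (inc_ne_zero (right_ne_zero_of_mul h0)).1
  exact hK (eq_of_subset_of_card_le (subset_inter hKF hKF') (by omega))

end IncidenceSums

/-- The boundary matrix `∂` of the complete complex; its columns range over all finsets, those of
the wrong size being zero columns. -/
def incMat (V : Type) [Fintype V] [DecidableEq V] [LinearOrder V] (k : ℕ) :
    Matrix (KSet V k) (Finset V) ℝ :=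
  fun F K => inc F.1 K

lemma Lc_apply {k : ℕ} (F F' : KSet V k) :
    Lc V k F F' = if F.1 = F'.1 then (k : ℝ) else eps F.1 F'.1 :=
  if_congr Subtype.ext_iff rfl rfl

lemma Lc_eq_incMat_mul_transpose (k : ℕ) : Lc V k = incMat V k * (incMat V k)ᵀ := by
  ext F F'
  simp only [Lc_apply, mul_apply, incMat, transpose_apply]
  split_ifs with h
  · simp only [← h, ← sq, sum_inc_sq, F.2]
  · exact (sum_inc_mul_inc_of_ne (F.2.trans F'.2.symm) h).symm

lemma Lc_posSemidef (k : ℕ) : (Lc V k).PosSemidef := by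
  rw [Lc_eq_incMat_mul_transpose, ← conjTranspose_eq_transpose_of_trivial]
  exact posSemidef_self_mul_conjTranspose _

lemma Lc_isSymm (k : ℕ) : (Lc V k).IsSymm := by
  rw [Lc_eq_incMat_mul_transpose, IsSymm, transpose_mul, transpose_transpose]

/-- The matrix `Y^S` of the paper. -/
def LcRestrict (S : Finset V) (k : ℕ) : Matrix (KSet V k) (KSet V k) ℝ :=
  fun F F' => if F.1 ∪ F'.1 ⊆ S then Lc V k F F' else 0

lemma LcRestrict_apply {S : Finset V} {k : ℕ} (F F' : KSet V k) :
    LcRestrict S k F F' = if F.1 ⊆ S ∧ F'.1 ⊆ S then Lc V k F F' else 0 :=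
  if_congr union_subset_iff rfl rfl

lemma LcRestrict_eq_diagonal_mul_Lc_mul_diagonal (S : Finset V) (k : ℕ) :
    LcRestrict S k = diagonal (fun F : KSet V k => if F.1 ⊆ S then 1 else 0) * Lc V k *
      diagonal (fun F : KSet V k => if F.1 ⊆ S then 1 else 0) := by
  ext F F'
  rw [mul_diagonal, diagonal_mul, LcRestrict_apply]
  split_ifs <;> simp_all

lemma LcRestrict_posSemidef (S : Finset V) (k : ℕ) : (LcRestrict S k).PosSemidef := by
  have h := (Lc_posSemidef k).mul_mul_conjTranspose_same
    (diagonal fun F : KSet V k => if F.1 ⊆ S then (1 : ℝ) else 0)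
  rwa [diagonal_conjTranspose, star_trivial, ← LcRestrict_eq_diagonal_mul_Lc_mul_diagonal] at h

lemma trace_LcRestrict (S : Finset V) (k : ℕ) :
    trace (LcRestrict S k) = k * (#S).choose k := by
  calc trace (LcRestrict S k) = ∑ F : KSet V k, if F.1 ⊆ S then (k : ℝ) else 0 :=
        sum_congr rfl fun F _ => by simp [LcRestrict, Lc]
    _ = k * (#S).choose k := by
        rw [sum_ite_subset_eq_sum_powersetCard S fun _ => (k : ℝ), sum_const, card_powersetCard,
          nsmul_eq_mul, mul_comm]

lemma sum_sq_Lc_of_subset {S : Finset V} {k : ℕ} {F : KSet V k} (hFS : F.1 ⊆ S) :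
    ∑ F' : KSet V k, (if F'.1 ⊆ S then Lc V k F F' ^ 2 else 0) = k * #S := by
  have hk : k ≤ #S := F.2 ▸ card_le_card hFS
  have hcount := card_filter_card_inter_add_one hFS
  rw [F.2] at hcount
  have hsq : ∀ G ∈ S.powersetCard k, (if F.1 = G then (k : ℝ) else eps F.1 G) ^ 2 =
      (if F.1 = G then (k : ℝ) ^ 2 else 0) + (if #(F.1 ∩ G) + 1 = k then 1 else 0) := by
    intro G hG
    have hGk := (mem_powersetCard.mp hG).2
    by_cases h : F.1 = G
    · rw [if_pos h, if_pos h, if_neg (by rw [← h, inter_self, F.2]; omega), add_zero]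
    · rw [if_neg h, if_neg h, zero_add, eps_sq F.2 hGk]
  simp_rw [Lc_apply]
  rw [sum_ite_subset_eq_sum_powersetCard S fun G => (if F.1 = G then (k : ℝ) else eps F.1 G) ^ 2,
    sum_congr rfl hsq, sum_add_distrib, sum_ite_eq, if_pos (mem_powersetCard.mpr ⟨hFS, F.2⟩),
    sum_boole, hcount]
  push_cast [Nat.cast_sub hk]
  ring

lemma trace_LcRestrict_mul_Lc (S : Finset V) (k : ℕ) :
    trace (LcRestrict S k * Lc V k) = k * (#S).choose k * #S := by
  calc trace (LcRestrict S k * Lc V k) = ∑ F : KSet V k, if F.1 ⊆ S then (k : ℝ) * #S else 0 := by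
        refine sum_congr rfl fun F _ => ?_
        rw [diag_apply, mul_apply]
        split_ifs with hF
        · rw [← sum_sq_Lc_of_subset hF]
          refine sum_congr rfl fun F' _ => ?_
          rw [(Lc_isSymm k).apply F F', LcRestrict_apply, sq]
          split_ifs <;> simp_all
        · exact sum_eq_zero fun F' _ => by simp [LcRestrict_apply, hF]
    _ = k * (#S).choose k * #S := by
        rw [sum_ite_subset_eq_sum_powersetCard S fun _ => (k : ℝ) * #S, sum_const,
          card_powersetCard, nsmul_eq_mul]
        ring

theorem indep_matrix_posSemidef_trace_general
    {V : Type} [Fintype V] [DecidableEq V] [LinearOrder V] (k : ℕ)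
    (S : Finset V)
    (YS : Matrix (KSet V k) (KSet V k) ℝ)
    (hYS : ∀ F F' : KSet V k, YS F F' = if F.1 ∪ F'.1 ⊆ S then Lc V k F F' else 0) :
    YS.PosSemidef ∧
    Matrix.trace YS = (k : ℝ) * (S.card.choose k : ℝ) ∧
    Matrix.trace (YS * Lc V k) = (k : ℝ) * (S.card.choose k : ℝ) * (S.card : ℝ) := by
  obtain rfl : YS = LcRestrict S k := Matrix.ext hYS
  exact ⟨LcRestrict_posSemidef S k, trace_LcRestrict S k, trace_LcRestrict_mul_Lc S k⟩

/-- For an independent set `S` of a pure `k`-dimensional complex `X`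
with `|S| ≥ k`, the matrix `Y^S` (agreeing with the complete down-Laplacian `L↓_{k-1}`
on pairs `(F,F')` with `F ∪ F' ⊆ S` and vanishing elsewhere) is positive semidefinite,
`⟨Y^S, I⟩ = k·binom(|S|,k)` and `⟨Y^S, L↓_{k-1}⟩ = k·binom(|S|,k)·|S|`. -/
theorem indep_matrix_posSemidef_trace
    {V : Type} [Fintype V] [DecidableEq V] [LinearOrder V] (X : SC V) (k : ℕ)
    (hk : 1 ≤ k) (hpure : X.Pure k) (S : Finset V) (hS : X.IsIndep k S)
    (hcard : k ≤ S.card)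
    (YS : Matrix (KSet V k) (KSet V k) ℝ)
    (hYS : ∀ F F' : KSet V k, YS F F' = if F.1 ∪ F'.1 ⊆ S then Lc V k F F' else 0) :
    YS.PosSemidef ∧
    Matrix.trace YS = (k : ℝ) * (S.card.choose k : ℝ) ∧
    Matrix.trace (YS * Lc V k) = (k : ℝ) * (S.card.choose k : ℝ) * (S.card : ℝ) :=
  indep_matrix_posSemidef_trace_general k S YS hYS
end

section
/- If X is the empty pure k-complex on n vertices (X_k = ∅), then ϑ_k(X) = n; if X is the complete k-complex K_n^k, then ϑ_k(X) = k. In both cases ϑ_k(X) = α(X). -/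
open Finset Matrix

variable {V : Type} [Fintype V] [DecidableEq V] [LinearOrder V]

/-! The down-Laplacian `L = L↓_{k-1}` of the full simplex and its up-Laplacian `L↑_{k-1} = δᵀδ`
satisfy `L + δᵀδ = n·I`, while `L = δ'δ'ᵀ` for the next-lower coboundary `δ'`; since `δδ' = 0`
this gives `L² = n·L`. Hence `⟨L, Y⟩ ≤ n·tr Y = n` for every feasible `Y`, and `Y = L / tr L`
attains `n`; it is feasible for the empty complex because `ε_{F,F'} L_{F,F'} = ε_{F,F'}²` only
depends on `F ∪ F'`. In the complete complex every off-diagonal entry of a feasible `Y` is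
forced to vanish, so `⟨L, Y⟩ = k·tr Y = k`. Every vertex set is independent in the empty
complex, and a vertex set is independent in `K_n^k` iff it has at most `k` elements. -/

section Combinatorics

omit [LinearOrder V]

omit [Fintype V] in
lemma card_lt_card_union_of_ne {F F' : Finset V} (hF : #F = #F') (hne : F ≠ F') :
    #F < #(F ∪ F') := by
  refine lt_of_le_of_ne (card_le_card subset_union_left) fun h => hne ?_
  have hF'F : F' ⊆ F := by
    rw [eq_of_subset_of_card_le subset_union_left h.ge]
    exact subset_union_right
  exact (eq_of_subset_of_card_le hF'F hF.le).symm

lemma KSet.lt_card_union_iff {k : ℕ} {F F' : KSet V k} : k < #(F.1 ∪ F'.1) ↔ F ≠ F' := by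
  constructor
  · rintro h rfl
    rw [union_self, F.2] at h
    exact lt_irrefl k h
  · intro h
    have := card_lt_card_union_of_ne (F.2.trans F'.2.symm) (Subtype.coe_ne_coe.mpr h)
    rwa [F.2] at this

lemma card_filter_superset_card_succ (F : Finset V) :
    #{H | F ⊆ H ∧ #H = #F + 1} = Fintype.card V - #F := by
  have himage : ({H | F ⊆ H ∧ #H = #F + 1} : Finset (Finset V)) = Fᶜ.image (insert · F) := by
    ext H
    simp only [mem_filter, mem_univ, true_and, mem_image, mem_compl, eq_comm (a := #H),
      ← exists_eq_insert_iff]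
  rw [himage, card_image_of_injOn fun a ha b _ h => (insert_inj (mem_compl.mp ha)).mp h,
    card_compl]

lemma card_filter_subset_card_pred (F : Finset V) : #{K | K ⊆ F ∧ #F = #K + 1} = #F := by
  have himage : ({K | K ⊆ F ∧ #F = #K + 1} : Finset (Finset V)) = F.image F.erase := by
    ext K
    simp only [mem_filter, mem_univ, true_and, mem_image, eq_comm (a := #F),
      ← exists_eq_insert_iff]
    constructor
    · rintro ⟨a, ha, rfl⟩
      exact ⟨a, mem_insert_self a K, erase_insert ha⟩
    · rintro ⟨a, ha, rfl⟩
      exact ⟨a, notMem_erase a F, insert_erase ha⟩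
  rw [himage, card_image_of_injOn (erase_injOn F)]

lemma sum_kset_eq_sum {m : ℕ} {g : Finset V → ℝ} (hg : ∀ K, g K ≠ 0 → #K = m) :
    ∑ K : KSet V m, g K.1 = ∑ K, g K := by
  rw [← sum_subtype {K | #K = m} (by simp), sum_filter_of_ne fun K _ => hg K]

end Combinatorics

section Incidence

omit [Fintype V]

lemma inc_eq_zero_of_not {F K : Finset V} (h : ¬(K ⊆ F ∧ #F = #K + 1)) : inc F K = 0 :=
  if_neg h

lemma inc_insert {K : Finset V} {a : V} (ha : a ∉ K) :
    inc (insert a K) K = (-1) ^ #{y ∈ K | y < a} := by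
  rw [inc, if_pos ⟨subset_insert a K, card_insert_of_notMem ha⟩, insert_sdiff_cancel ha,
    sum_singleton]

lemma inc_mul_self (F K : Finset V) :
    inc F K * inc F K = if K ⊆ F ∧ #F = #K + 1 then 1 else 0 := by
  split_ifs with h
  · obtain ⟨a, ha, rfl⟩ := exists_eq_insert_iff.mpr ⟨h.1, h.2.symm⟩
    rw [inc_insert ha, ← mul_pow]
    norm_num
  · rw [inc, if_neg h, zero_mul]

lemma inc_ne_zero_iff {F K : Finset V} : inc F K ≠ 0 ↔ K ⊆ F ∧ #F = #K + 1 := by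
  rw [← mul_self_ne_zero, inc_mul_self]
  split_ifs <;> simp_all

lemma inc_insert_insert {K : Finset V} {a b : V} (ha : a ∉ K) (hb : b ∉ K) (hab : a ≠ b) :
    inc (insert b (insert a K)) (insert a K) =
      (-1) ^ (#{y ∈ K | y < b} + if a < b then 1 else 0) := by
  rw [inc_insert (by simp [hab.symm, hb]), filter_insert]
  split_ifs with h
  · rw [card_insert_of_notMem (fun hm => ha (mem_filter.mp hm).1)]
  · rfl

lemma inc_insert_insert_mul_add {K : Finset V} {a b : V} (ha : a ∉ K) (hb : b ∉ K)
    (hab : a ≠ b) :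
    inc (insert b (insert a K)) (insert a K) * inc (insert a K) K +
      inc (insert a (insert b K)) (insert b K) * inc (insert b K) K = 0 := by
  rw [inc_insert_insert ha hb hab, inc_insert_insert hb ha hab.symm, inc_insert ha, inc_insert hb]
  rcases hab.lt_or_gt with h | h <;>
    simp only [h, h.not_gt, if_true, if_false, add_zero, pow_add] <;> ring

lemma inc_insert_insert_mul {K : Finset V} {a b : V} (ha : a ∉ K) (hb : b ∉ K) (hab : a ≠ b) :
    inc (insert b (insert a K)) (insert a K) * inc (insert a (insert b K)) (insert b K) =
      -(inc (insert a K) K * inc (insert b K) K) := by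
  rw [inc_insert_insert ha hb hab, inc_insert_insert hb ha hab.symm, inc_insert ha, inc_insert hb]
  rcases hab.lt_or_gt with h | h <;>
    simp only [h, h.not_gt, if_true, if_false, add_zero, pow_add] <;> ring

lemma inc_union_mul_inc_union {F F' : Finset V} (hF : #F = #F') (hne : F ≠ F') :
    inc (F ∪ F') F * inc (F ∪ F') F' = -eps F F' := by
  have hcard := card_union_add_card_inter F F'
  have hlt := card_lt_card_union_of_ne hF hne
  rw [eps]
  by_cases hu : #(F ∪ F') = #F + 1
  · generalize hK : F ∩ F' = K
    obtain ⟨a, ha, rfl⟩ := exists_eq_insert_iff.mpr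
      ⟨hK ▸ inter_subset_left, by rw [← hK]; omega⟩
    obtain ⟨b, hb, rfl⟩ := exists_eq_insert_iff.mpr
      ⟨hK ▸ inter_subset_right, by rw [← hK]; omega⟩
    have hab : a ≠ b := by rintro rfl; exact hne rfl
    have hab' : insert a K ∪ insert b K = insert b (insert a K) := by
      ext; simp only [mem_union, mem_insert]; tauto
    rw [hab', ← inc_insert_insert_mul ha hb hab, insert_comm b a]
  · have hF0 : inc F (F ∩ F') = 0 := inc_eq_zero_of_not fun h => hu (by omega)
    rw [inc_eq_zero_of_not fun h => hu h.2, hF0, zero_mul, zero_mul, neg_zero]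

lemma eps_self (F : Finset V) : eps F F = 0 := by
  rw [eps, inter_self, inc_eq_zero_of_not fun h => by omega, zero_mul]

lemma eps_mul_self {k : ℕ} {F F' : Finset V} (hF : #F = k) (hF' : #F' = k) :
    eps F F' * eps F F' = if #(F ∪ F') = k + 1 then 1 else 0 := by
  have := card_union_add_card_inter F F'
  rw [eps, mul_mul_mul_comm, inc_mul_self, inc_mul_self]
  simp only [inter_subset_left, inter_subset_right, true_and]
  split_ifs <;> norm_num <;> omega

end Incidence

lemma sum_inc_mul_self_left (F : Finset V) :
    ∑ H, inc H F * inc H F = Fintype.card V - #F := by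
  simp_rw [inc_mul_self, sum_boole, card_filter_superset_card_succ,
    Nat.cast_sub (card_le_univ F)]

lemma sum_inc_mul_self_right (F : Finset V) : ∑ K, inc F K * inc F K = #F := by
  simp_rw [inc_mul_self, sum_boole, card_filter_subset_card_pred]

lemma sum_inc_mul_inc_left_of_ne {F F' : Finset V} (hF : #F = #F') (hne : F ≠ F') :
    ∑ H, inc H F * inc H F' = -eps F F' := by
  rw [Fintype.sum_eq_single (F ∪ F'), inc_union_mul_inc_union hF hne]
  intro H hH
  by_contra h
  obtain ⟨hFH, hcard⟩ := inc_ne_zero_iff.mp (left_ne_zero_of_mul h)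
  obtain ⟨hF'H, -⟩ := inc_ne_zero_iff.mp (right_ne_zero_of_mul h)
  exact hH (eq_of_subset_of_card_le (union_subset hFH hF'H)
    (by have := card_lt_card_union_of_ne hF hne; omega)).symm

lemma sum_inc_mul_inc_right_of_ne {F F' : Finset V} (hF : #F = #F') (hne : F ≠ F') :
    ∑ K, inc F K * inc F' K = eps F F' := by
  rw [Fintype.sum_eq_single (F ∩ F')]
  · rfl
  intro K hK
  by_contra h
  obtain ⟨hKF, hcard⟩ := inc_ne_zero_iff.mp (left_ne_zero_of_mul h)
  obtain ⟨hKF', -⟩ := inc_ne_zero_iff.mp (right_ne_zero_of_mul h)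
  have := card_union_add_card_inter F F'
  have := card_lt_card_union_of_ne hF hne
  exact hK (eq_of_subset_of_card_le (subset_inter hKF hKF') (by omega))

lemma sum_inc_mul_inc_eq_zero (H K : Finset V) : ∑ F, inc H F * inc F K = 0 := by
  by_cases hKH : K ⊆ H ∧ #H = #K + 2
  · obtain ⟨a, b, hab, hHK⟩ := card_eq_two.mp
      (show #(H \ K) = 2 by rw [card_sdiff_of_subset hKH.1]; omega)
    have ha : a ∉ K := (mem_sdiff.mp (hHK ▸ mem_insert_self a {b})).2
    have hb : b ∉ K := (mem_sdiff.mp (hHK ▸ mem_insert_of_mem (mem_singleton_self b))).2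
    have hHab : H = insert b (insert a K) := by
      rw [← union_sdiff_of_subset hKH.1, hHK]
      ext
      simp only [mem_union, mem_insert, mem_singleton]
      tauto
    have hHba : H = insert a (insert b K) := hHab.trans (insert_comm b a K)
    have hsupport : ∀ F, inc H F * inc F K ≠ 0 → F ∈ ({insert a K, insert b K} : Finset _) := by
      intro F hF
      obtain ⟨hFH, -⟩ := inc_ne_zero_iff.mp (left_ne_zero_of_mul hF)
      obtain ⟨x, hx, rfl⟩ := exists_eq_insert_iff.mpr
        (And.imp_right Eq.symm (inc_ne_zero_iff.mp (right_ne_zero_of_mul hF)))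
      have : x ∈ H \ K := mem_sdiff.mpr ⟨hFH (mem_insert_self x K), hx⟩
      rw [hHK, mem_insert, mem_singleton] at this
      rcases this with rfl | rfl <;> simp
    rw [← sum_subset (subset_univ _) fun F _ hF => not_not.mp (mt (hsupport F) hF),
      sum_pair (by simpa [insert_inj ha] using hab)]
    nth_rw 1 [hHab]
    rw [hHba]
    exact inc_insert_insert_mul_add ha hb hab
  · refine sum_eq_zero fun F _ => not_not.mp fun h => hKH ?_
    obtain ⟨hFH, hH⟩ := inc_ne_zero_iff.mp (left_ne_zero_of_mul h)
    obtain ⟨hKF, hF⟩ := inc_ne_zero_iff.mp (right_ne_zero_of_mul h)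
    exact ⟨hKF.trans hFH, by omega⟩

def simplexCoboundary (V : Type) [Fintype V] [DecidableEq V] [LinearOrder V] (m : ℕ) :
    Matrix (KSet V (m + 1)) (KSet V m) ℝ :=
  fun H F => inc H.1 F.1

lemma simplexCoboundary_mul_simplexCoboundary (m : ℕ) :
    simplexCoboundary V (m + 1) * simplexCoboundary V m = 0 := by
  ext H K
  rw [mul_apply, Matrix.zero_apply]
  refine (sum_kset_eq_sum (g := fun F => inc H.1 F * inc F K.1) fun F hF => ?_).trans
    (sum_inc_mul_inc_eq_zero H.1 K.1)
  have := (inc_ne_zero_iff.mp (left_ne_zero_of_mul hF)).2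
  have := H.2
  omega

lemma Lc_succ_eq_mul_transpose (m : ℕ) :
    Lc V (m + 1) = simplexCoboundary V m * (simplexCoboundary V m)ᵀ := by
  ext F F'
  simp only [mul_apply, transpose_apply, simplexCoboundary]
  rw [sum_kset_eq_sum (g := fun K => inc F.1 K * inc F'.1 K) fun K hK => by
    have := (inc_ne_zero_iff.mp (left_ne_zero_of_mul hK)).2; have := F.2; omega]
  by_cases h : F = F'
  · subst h
    rw [Lc, if_pos rfl, sum_inc_mul_self_right, F.2]
  · rw [Lc, if_neg h,
      sum_inc_mul_inc_right_of_ne (F.2.trans F'.2.symm) (Subtype.coe_ne_coe.mpr h)]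

lemma Lc_add_transpose_mul_simplexCoboundary (m : ℕ) :
    Lc V m + (simplexCoboundary V m)ᵀ * simplexCoboundary V m = (Fintype.card V : ℝ) • 1 := by
  ext F F'
  simp only [Matrix.add_apply, mul_apply, transpose_apply, simplexCoboundary, Matrix.smul_apply,
    smul_eq_mul]
  rw [sum_kset_eq_sum (g := fun H => inc H F.1 * inc H F'.1) fun H hH => by
    have := (inc_ne_zero_iff.mp (left_ne_zero_of_mul hH)).2; have := F.2; omega]
  by_cases h : F = F'
  · subst h
    rw [Lc, if_pos rfl, sum_inc_mul_self_left, F.2, one_apply_eq]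
    ring
  · rw [Lc, if_neg h, one_apply_ne h,
      sum_inc_mul_inc_left_of_ne (F.2.trans F'.2.symm) (Subtype.coe_ne_coe.mpr h)]
    ring

lemma Lc_mul_self (m : ℕ) :
    Lc V (m + 1) * Lc V (m + 1) = (Fintype.card V : ℝ) • Lc V (m + 1) := by
  set δ := simplexCoboundary V m
  set δ' := simplexCoboundary V (m + 1)
  have hLc : Lc V (m + 1) = (Fintype.card V : ℝ) • 1 - δ'ᵀ * δ' :=
    eq_sub_of_add_eq (Lc_add_transpose_mul_simplexCoboundary (m + 1))
  have hδ : δ * δᵀ * (δ'ᵀ * δ') = δ * (δ' * δ)ᵀ * δ' := by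
    simp only [transpose_mul, Matrix.mul_assoc]
  calc Lc V (m + 1) * Lc V (m + 1)
      = (Fintype.card V : ℝ) • Lc V (m + 1) - δ * δᵀ * (δ'ᵀ * δ') := by
        nth_rw 2 [hLc]
        rw [mul_sub, Matrix.mul_smul, Matrix.mul_one, Lc_succ_eq_mul_transpose]
    _ = (Fintype.card V : ℝ) • Lc V (m + 1) := by
        rw [hδ, simplexCoboundary_mul_simplexCoboundary, transpose_zero, Matrix.mul_zero,
          Matrix.zero_mul, sub_zero]

lemma posSemidef_Lc (m : ℕ) : (Lc V (m + 1)).PosSemidef := by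
  rw [Lc_succ_eq_mul_transpose, ← conjTranspose_eq_transpose_of_trivial]
  exact posSemidef_self_mul_conjTranspose _

lemma trace_Lc (k : ℕ) : (Lc V k).trace = k * Fintype.card (KSet V k) := by
  simp [trace, Lc, mul_comm]

lemma trace_Lc_pos {k : ℕ} (hk : 1 ≤ k) (hkn : k ≤ Fintype.card V) : 0 < (Lc V k).trace := by
  rw [trace_Lc, Fintype.card_finset_len]
  exact mul_pos (by exact_mod_cast hk) (by exact_mod_cast Nat.choose_pos hkn)

lemma trace_Lc_mul_le {k : ℕ} {Y : Matrix (KSet V k) (KSet V k) ℝ} (hY : Y.PosSemidef) :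
    (Lc V k * Y).trace ≤ Fintype.card V * Y.trace := by
  set δ := simplexCoboundary V k
  have hδYδ := (hY.mul_mul_conjTranspose_same δ).trace_nonneg
  rw [conjTranspose_eq_transpose_of_trivial, trace_mul_cycle] at hδYδ
  rw [eq_sub_of_add_eq (Lc_add_transpose_mul_simplexCoboundary k), sub_mul, trace_sub,
    smul_mul, Matrix.one_mul, trace_smul, smul_eq_mul]
  linarith

lemma eps_mul_Lc {k : ℕ} (F F' : KSet V k) :
    eps F.1 F'.1 * Lc V k F F' = eps F.1 F'.1 * eps F.1 F'.1 := by
  by_cases h : F = F'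
  · rw [h, eps_self, zero_mul, zero_mul]
  · rw [Lc, if_neg h]

lemma Lc_eq_zero_of_card_union {k : ℕ} {F F' : KSet V k} (h : k + 2 ≤ #(F.1 ∪ F'.1)) :
    Lc V k F F' = 0 := by
  rw [Lc, if_neg (KSet.lt_card_union_iff.mp (by omega)), ← mul_self_eq_zero,
    eps_mul_self F.2 F'.2, if_neg (by omega)]

lemma thetaFeasible_emptyComplex_iff {k : ℕ} {Y : Matrix (KSet V k) (KSet V k) ℝ} :
    thetaFeasible (emptyComplex V) k Y ↔ Y.PosSemidef ∧ Y.trace = 1 ∧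
      (∀ F F' : KSet V k, k + 2 ≤ #(F.1 ∪ F'.1) → Y F F' = 0) ∧
      (∀ F F' G G' : KSet V k, F.1 ∪ F'.1 = G.1 ∪ G'.1 →
        eps F.1 F'.1 * Y F F' = eps G.1 G'.1 * Y G G') := by
  simp [thetaFeasible, emptyComplex, SC.dfaces]

lemma thetaFeasible_emptyComplex_smul_Lc {k : ℕ} (hk : 1 ≤ k) (hkn : k ≤ Fintype.card V) :
    thetaFeasible (emptyComplex V) k ((Lc V k).trace⁻¹ • Lc V k) := by
  have htrace := trace_Lc_pos hk hkn
  obtain ⟨m, rfl⟩ := Nat.exists_eq_add_of_le' hk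
  refine thetaFeasible_emptyComplex_iff.mpr ⟨(posSemidef_Lc m).smul (inv_nonneg.mpr htrace.le),
    by rw [trace_smul, smul_eq_mul, inv_mul_cancel₀ htrace.ne'], fun F F' h => ?_,
    fun F F' G G' h => ?_⟩
  · rw [Matrix.smul_apply, Lc_eq_zero_of_card_union h, smul_zero]
  · simp only [Matrix.smul_apply, smul_eq_mul, mul_left_comm _ (Lc V (m + 1)).trace⁻¹,
      eps_mul_Lc, eps_mul_self F.2 F'.2, eps_mul_self G.2 G'.2, h]

lemma theta_emptyComplex {k : ℕ} (hk : 1 ≤ k) (hkn : k ≤ Fintype.card V) :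
    theta (emptyComplex V) k = Fintype.card V := by
  have htrace := (trace_Lc_pos hk hkn).ne'
  refine IsGreatest.csSup_eq ⟨⟨_, thetaFeasible_emptyComplex_smul_Lc hk hkn, ?_⟩, ?_⟩
  · obtain ⟨m, rfl⟩ := Nat.exists_eq_add_of_le' hk
    rw [Matrix.mul_smul, Lc_mul_self, trace_smul, trace_smul, smul_eq_mul, smul_eq_mul,
      mul_comm (Fintype.card V : ℝ), inv_mul_cancel_left₀ htrace]
  · rintro t ⟨Y, hY, rfl⟩
    simpa [hY.2.1] using trace_Lc_mul_le hY.1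

lemma thetaFeasible_completeComplex_apply_of_ne {k : ℕ} {Y : Matrix (KSet V k) (KSet V k) ℝ}
    (hY : thetaFeasible (completeComplex V k) k Y) {F F' : KSet V k} (hne : F ≠ F') :
    Y F F' = 0 := by
  obtain ⟨-, -, hface, hcard, -⟩ := hY
  have hlt := KSet.lt_card_union_iff.mpr hne
  by_cases h : #(F.1 ∪ F'.1) = k + 1
  · exact hface F F' (by simp [completeComplex, SC.dfaces, h])
  · exact hcard F F' (by omega)

lemma thetaFeasible_completeComplex_smul_one {k : ℕ} (hkn : k ≤ Fintype.card V) :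
    thetaFeasible (completeComplex V k) k ((Fintype.card (KSet V k) : ℝ)⁻¹ • 1) := by
  have hcard : (0 : ℝ) < Fintype.card (KSet V k) := by
    rw [Fintype.card_finset_len]
    exact_mod_cast Nat.choose_pos hkn
  set Y : Matrix (KSet V k) (KSet V k) ℝ := (Fintype.card (KSet V k) : ℝ)⁻¹ • 1 with hY
  have hoff : ∀ F F' : KSet V k, k < #(F.1 ∪ F'.1) → Y F F' = 0 := fun F F' h => by
    rw [hY, Matrix.smul_apply, one_apply_ne (KSet.lt_card_union_iff.mp h), smul_zero]
  have heps : ∀ F F' : KSet V k, eps F.1 F'.1 * Y F F' = 0 := fun F F' => by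
    by_cases h : F = F'
    · rw [h, eps_self, zero_mul]
    · rw [hoff F F' (KSet.lt_card_union_iff.mpr h), mul_zero]
  refine ⟨PosSemidef.one.smul (inv_nonneg.mpr hcard.le),
    by rw [trace_smul, trace_one, smul_eq_mul, inv_mul_cancel₀ hcard.ne'],
    fun F F' h => hoff F F' ?_, fun F F' h => hoff F F' (by omega),
    fun F F' G G' _ => by rw [heps, heps]⟩
  simp only [completeComplex, SC.dfaces, mem_filter] at h
  omega

lemma trace_Lc_mul_eq_of_thetaFeasible_completeComplex {k : ℕ}
    {Y : Matrix (KSet V k) (KSet V k) ℝ} (hY : thetaFeasible (completeComplex V k) k Y) :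
    (Lc V k * Y).trace = k := by
  have hdiag : Y = diagonal Y.diag := by
    ext F F'
    by_cases h : F = F'
    · rw [h, diagonal_apply_eq, diag_apply]
    · rw [diagonal_apply_ne _ h, thetaFeasible_completeComplex_apply_of_ne hY h]
  calc (Lc V k * Y).trace = ∑ F, k * Y F F := by
        conv_lhs => rw [hdiag]
        simp [trace, mul_diagonal, Lc]
    _ = k * Y.trace := by rw [← mul_sum]; rfl
    _ = k := by rw [hY.2.1, mul_one]

lemma theta_completeComplex {k : ℕ} (hkn : k ≤ Fintype.card V) :
    theta (completeComplex V k) k = k :=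
  IsGreatest.csSup_eq ⟨⟨_, thetaFeasible_completeComplex_smul_one hkn,
    trace_Lc_mul_eq_of_thetaFeasible_completeComplex (thetaFeasible_completeComplex_smul_one hkn)⟩,
    by rintro t ⟨Y, hY, rfl⟩; exact (trace_Lc_mul_eq_of_thetaFeasible_completeComplex hY).le⟩

omit [LinearOrder V] in
lemma alphaNum_eq_of_isIndep_iff {X : SC V} {k j : ℕ} (hj : j ≤ Fintype.card V)
    (hX : ∀ S, X.IsIndep k S ↔ #S ≤ j) : alphaNum X k = j := by
  have hset : {m | ∃ S : Finset V, X.IsIndep k S ∧ #S = m} = Set.Iic j := by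
    ext m
    simp only [hX, Set.mem_ofPred_eq, Set.mem_Iic]
    constructor
    · rintro ⟨S, hS, rfl⟩
      exact hS
    · intro hm
      obtain ⟨S, -, hS⟩ := exists_subset_card_eq (s := (univ : Finset V))
        (by simpa using hm.trans hj)
      exact ⟨S, by omega, hS⟩
  rw [alphaNum, hset, csSup_Iic]

omit [LinearOrder V] in
lemma isIndep_completeComplex_iff {k : ℕ} {S : Finset V} :
    (completeComplex V k).IsIndep k S ↔ #S ≤ k := by
  simp only [SC.IsIndep, completeComplex, SC.dfaces, mem_filter, mem_univ, true_and, and_imp]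
  constructor
  · intro hS
    by_contra! h
    obtain ⟨H, hHS, hH⟩ := exists_subset_card_eq (show k + 1 ≤ #S by omega)
    exact hS H hH.le hH hHS
  · intro hS H _ hH hHS
    have := card_le_card hHS
    omega

omit [LinearOrder V] in
lemma alphaNum_emptyComplex (k : ℕ) : alphaNum (emptyComplex V) k = Fintype.card V :=
  alphaNum_eq_of_isIndep_iff le_rfl fun S => by
    simp [SC.IsIndep, emptyComplex, SC.dfaces, card_le_univ]

omit [LinearOrder V] in
lemma alphaNum_completeComplex {k : ℕ} (hkn : k ≤ Fintype.card V) :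
    alphaNum (completeComplex V k) k = k :=
  alphaNum_eq_of_isIndep_iff hkn fun _ => isIndep_completeComplex_iff

/-- The empty pure `k`-complex `X` on `n` vertices has `ϑ_k(X) = n`,
and the complete `k`-complex `K_n^k` has `ϑ_k(K_n^k) = k`; in both cases
`ϑ_k(X) = α(X)`. -/
theorem theta_empty_and_complete
    (V : Type) [Fintype V] [DecidableEq V] [LinearOrder V] (k : ℕ)
    (hk : 1 ≤ k) (hkn : k ≤ Fintype.card V) :
    theta (emptyComplex V) k = (Fintype.card V : ℝ) ∧
    alphaNum (emptyComplex V) k = Fintype.card V ∧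
    theta (completeComplex V k) k = (k : ℝ) ∧
    alphaNum (completeComplex V k) k = k :=
  ⟨theta_emptyComplex hk hkn, alphaNum_emptyComplex k, theta_completeComplex hkn,
    alphaNum_completeComplex hkn⟩
end

section
/- Write the down-Laplacian L↓_1 of the complete 2-complex on 3m vertices by blocks according to binom(V,2) = X_1 ∪ (A×A ∪ B×B ∪ C×C), as L↓_1 = [[L↓_1(X), M],[Mᵀ, N]] where X = K²_{m,m,m}. Then MᵀM = 2m·N, and consequently the block matrix [[2m·I, −M],[−Mᵀ, 2m·I − N]] is positive semidefinite since m·I − N ⪰ 0 (N being block diagonal with three copies of L↓_1(K_m^2)). -/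
open Finset Matrix

variable {V : Type} [Fintype V] [DecidableEq V] [LinearOrder V]

/-- The complete tripartite 2-complex `K²_{m,m,m}` on `3m` vertices: the three parts are
the fibers of `v ↦ v / m`, the 2-faces are the triangles with one vertex in each part,
and the 1-faces are the edges with at most one vertex in each part. -/
def tripartite (m : ℕ) : SC (Fin (3 * m)) :=
  ⟨univ.filter fun F => F.card ≤ 3 ∧ ∀ v ∈ F, ∀ w ∈ F, v ≠ w → v.val / m ≠ w.val / m, by
    intro F hF K hK
    simp only [mem_filter, mem_univ, true_and] at hF ⊢
    exact ⟨le_trans (card_le_card hK) hF.1,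
      fun v hv w hw hvw => hF.2 v (hK hv) w (hK hw) hvw⟩⟩


/-!
For a pair `F = {a < b}` the vector `v ↦ inc F {v}` is `e_b - e_a`, and `L↓_1` of the complete
complex is the Gram matrix of these vectors. Stacking them over the edges of `X` and over the
monochromatic pairs gives matrices `D_X`, `D_Y` with `M = D_X D_Yᵀ` and `N = D_Y D_Yᵀ`. Now
`D_Xᵀ D_X = 2m·I - A` and `D_Yᵀ D_Y = m·I - J` are the graph Laplacians of `K_{m,m,m}` and of
three disjoint copies of `K_m`, where `A` and `J` depend only on the parts of their indices; hence
both kill `e_b - e_a` when `a` and `b` lie in the same part. So `MᵀM = D_Y (2m·I) D_Yᵀ = 2m·N`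
and `N² = m·N`, which gives `m·I - N = m⁻¹ (m·I - N)² ⪰ 0`; finally the Schur complement of
`2m·I` in the block matrix is `2m·I - N - (2m)⁻¹ MᵀM = 2 (m·I - N) ⪰ 0`.
-/

section Incidence

variable {W : Type} [DecidableEq W] [LinearOrder W]

lemma inc_singleton_of_notMem {F : Finset W} {v : W} (h : v ∉ F) : inc F {v} = 0 := by
  rw [inc, if_neg]
  rintro ⟨hvF, -⟩
  exact h (singleton_subset_iff.1 hvF)

lemma inc_empty_of_card_ne_one {F : Finset W} (hF : F.card ≠ 1) : inc F ∅ = 0 := by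
  simp [inc, hF]

lemma inc_pair_left {a b : W} (h : a < b) : inc {a, b} {a} = -1 := by
  have hsd : ({a, b} : Finset W) \ {a} = {b} := by ext; simp; grind
  rw [inc, if_pos ⟨by simp, by simp [card_pair h.ne]⟩, hsd]
  simp [filter_singleton, h]

lemma inc_pair_right {a b : W} (h : a < b) : inc {a, b} {b} = 1 := by
  have hsd : ({a, b} : Finset W) \ {b} = {a} := by ext; simp; grind
  rw [inc, if_pos ⟨by simp, by simp [card_pair h.ne]⟩, hsd]
  simp [filter_singleton, h.not_gt]

lemma inc_pair_mul_inc_pair {a b : W} (hab : a ≠ b) : inc {a, b} {a} * inc {a, b} {b} = -1 := by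
  rcases hab.lt_or_gt with h | h
  · rw [inc_pair_left h, inc_pair_right h]; ring
  · rw [pair_comm, inc_pair_left h, inc_pair_right h]; ring

lemma inc_mul_self_of_mem {F : Finset W} (hF : F.card = 2) {v : W} (hv : v ∈ F) :
    inc F {v} * inc F {v} = 1 := by
  obtain ⟨a, b, hab, rfl⟩ := card_eq_two.1 hF
  wlog h : a < b generalizing a b
  · rw [pair_comm] at hF hv ⊢
    exact this b a hab.symm hF hv (hab.lt_or_gt.resolve_left h)
  rcases mem_insert.1 hv with rfl | hv
  · rw [inc_pair_left h]; ring
  · rw [mem_singleton.1 hv, inc_pair_right h]; ring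

lemma inc_mul_inc_of_ne {F : Finset W} (hF : F.card = 2) {v w : W} (hvw : v ≠ w) :
    inc F {v} * inc F {w} = if F = {v, w} then -1 else 0 := by
  by_cases hv : v ∈ F
  · by_cases hw : w ∈ F
    · have hF' : F = {v, w} :=
        (eq_of_subset_of_card_le (insert_subset hv (singleton_subset_iff.2 hw))
          (by rw [hF, card_pair hvw])).symm
      subst hF'
      rw [if_pos rfl, inc_pair_mul_inc_pair hvw]
    · rw [inc_singleton_of_notMem hw, mul_zero, if_neg (by rintro rfl; simp at hw)]
  · rw [inc_singleton_of_notMem hv, zero_mul, if_neg (by rintro rfl; simp at hv)]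

lemma sum_inc_singleton_of_subset {F S : Finset W} (hF : F.card = 2) (hFS : F ⊆ S) :
    ∑ v ∈ S, inc F {v} = 0 := by
  rw [← sum_subset hFS fun v _ hv => inc_singleton_of_notMem hv]
  obtain ⟨a, b, hab, rfl⟩ := card_eq_two.1 hF
  rw [sum_pair hab]
  rcases hab.lt_or_gt with h | h
  · rw [inc_pair_left h, inc_pair_right h]; ring
  · rw [pair_comm, inc_pair_left h, inc_pair_right h]; ring

lemma sum_inc_singleton_of_disjoint {F S : Finset W} (h : Disjoint F S) :
    ∑ v ∈ S, inc F {v} = 0 :=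
  sum_eq_zero fun _ hv => inc_singleton_of_notMem (disjoint_right.1 h hv)

end Incidence

lemma of_fiberwise_mul_eq_zero {n ι κ R : Type*} [Fintype n] [DecidableEq ι]
    [NonUnitalNonAssocSemiring R] (p : n → ι) (f : ι → ι → R) (U : Matrix n κ R)
    (hU : ∀ c j, ∑ w with p w = c, U w j = 0) :
    Matrix.of (fun v w => f (p v) (p w)) * U = 0 := by
  ext v j
  rw [mul_apply, Matrix.zero_apply,
    ← sum_fiberwise_of_maps_to (t := univ.image p) fun w _ => mem_image_of_mem p (mem_univ w)]
  refine sum_eq_zero fun c _ => ?_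
  rw [← mul_zero (f (p v) c), ← hU c j, mul_sum]
  refine sum_congr rfl fun w hw => ?_
  rw [of_apply, (mem_filter.1 hw).2]

section EdgeIncidence

variable {W : Type} [Fintype W] [DecidableEq W] [LinearOrder W]
  (P : Finset W → Prop)

lemma Lc_two_apply (F G : KSet W 2) : Lc W 2 F G = ∑ v, inc F.1 {v} * inc G.1 {v} := by
  have hsupp :
      ∑ v, inc F.1 {v} * inc G.1 {v} = ∑ v ∈ F.1 ∩ G.1, inc F.1 {v} * inc G.1 {v} := by
    refine (sum_subset (subset_univ _) fun v _ hv => ?_).symm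
    rw [mem_inter, not_and_or] at hv
    rcases hv with hv | hv <;> simp [inc_singleton_of_notMem hv]
  rw [hsupp, Lc]
  split_ifs with hFG
  · subst hFG
    rw [inter_self, sum_congr rfl fun v hv => inc_mul_self_of_mem F.2 hv, sum_const, F.2]
    norm_num
  · have hlt : (F.1 ∩ G.1).card < 2 := by
      refine lt_of_le_of_ne ((card_le_card inter_subset_left).trans_eq F.2) fun h =>
        hFG (Subtype.ext ?_)
      have hF : F.1 ∩ G.1 = F.1 := eq_of_subset_of_card_le inter_subset_left (by rw [h, F.2])
      have hG : F.1 ∩ G.1 = G.1 := eq_of_subset_of_card_le inter_subset_right (by rw [h, G.2])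
      rw [← hF, hG]
    interval_cases h : (F.1 ∩ G.1).card
    · rw [card_eq_zero.1 h, eps, card_eq_zero.1 h, inc_empty_of_card_ne_one (by simp [F.2])]
      simp
    · obtain ⟨c, hc⟩ := card_eq_one.1 h
      rw [eps, hc, sum_singleton]

def edgeIncidence : Matrix {F : KSet W 2 // P F.1} W ℝ := fun F v => inc F.1.1 {v}

lemma edgeIncidence_mul_transpose_apply (Q : Finset W → Prop)
    (F : {F : KSet W 2 // P F.1}) (G : {G : KSet W 2 // Q G.1}) :
    (edgeIncidence P * (edgeIncidence Q)ᵀ) F G = Lc W 2 F.1 G.1 := by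
  rw [Lc_two_apply]
  rfl

lemma edgeIncidence_gram_apply_of_ne [DecidablePred P] {v w : W} (hvw : v ≠ w) :
    ((edgeIncidence P)ᵀ * edgeIncidence P) v w = if P {v, w} then -1 else 0 := by
  simp only [mul_apply, transpose_apply, edgeIncidence]
  rw [sum_congr rfl fun F _ => inc_mul_inc_of_ne F.1.2 hvw]
  split_ifs with hP
  · let F₀ : {F : KSet W 2 // P F.1} := ⟨⟨{v, w}, card_pair hvw⟩, hP⟩
    simp_rw [show ∀ F : {F : KSet W 2 // P F.1}, F.1.1 = {v, w} ↔ F = F₀ from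
      fun F => by rw [Subtype.ext_iff, Subtype.ext_iff]]
    simp
  · exact sum_eq_zero fun F _ => if_neg fun h : F.1.1 = {v, w} => hP (h ▸ F.2)

lemma sum_edgeIncidence_gram_apply_eq_zero [DecidablePred P] (v : W) :
    ∑ w, ((edgeIncidence P)ᵀ * edgeIncidence P) v w = 0 := by
  simp only [mul_apply, transpose_apply]
  rw [sum_comm]
  refine sum_eq_zero fun F _ => ?_
  rw [← mul_sum]
  exact mul_eq_zero_of_right _ (sum_inc_singleton_of_subset F.1.2 (subset_univ _))

variable {P} in
lemma edgeIncidence_gram_eq [DecidablePred P] (A : Matrix W W ℝ) (d : ℝ)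
    (hA : ∀ v w, v ≠ w → A v w = if P {v, w} then 1 else 0) (hrow : ∀ v, ∑ w, A v w = d) :
    (edgeIncidence P)ᵀ * edgeIncidence P = d • 1 - A := by
  ext v w
  by_cases hvw : v = w
  · -- the rows of both sides sum to `0`, so the off-diagonal entries determine the diagonal
    subst hvw
    have hsum := sum_edgeIncidence_gram_apply_eq_zero P v
    rw [← add_sum_erase _ _ (mem_univ v)] at hsum
    rw [← hrow v, ← add_sum_erase _ _ (mem_univ v)]
    have hoff : ∑ w ∈ univ.erase v, ((edgeIncidence P)ᵀ * edgeIncidence P) v w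
        = -∑ w ∈ univ.erase v, A v w := by
      rw [← sum_neg_distrib]
      refine sum_congr rfl fun w hw => ?_
      have hvw : v ≠ w := (ne_of_mem_erase hw).symm
      rw [edgeIncidence_gram_apply_of_ne P hvw, hA v w hvw]
      split_ifs <;> norm_num
    simp only [Matrix.sub_apply, Matrix.smul_apply, one_apply_eq, smul_eq_mul, mul_one]
    linarith
  · rw [edgeIncidence_gram_apply_of_ne P hvw, Matrix.sub_apply, Matrix.smul_apply,
      one_apply_ne hvw, hA v w hvw]
    split_ifs <;> simp

end EdgeIncidence

section Tripartite

variable {m : ℕ}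

lemma card_filter_div_eq_div (v : Fin (3 * m)) :
    #{w : Fin (3 * m) | v.val / m = w.val / m} = m := by
  rw [card_equiv finProdFinEquiv.symm (t := {v.divNat} ×ˢ univ) fun w => by
    simpa [Fin.ext_iff, Fin.coe_divNat] using fun _ => ⟨_, Fin.coe_modNat w⟩]
  simp

lemma pair_mem_tripartite_faces {v w : Fin (3 * m)} (hvw : v ≠ w) :
    {v, w} ∈ (tripartite m).faces ↔ v.val / m ≠ w.val / m := by
  simp only [tripartite, mem_filter, mem_univ, true_and, card_pair hvw, mem_insert,
    mem_singleton, forall_eq_or_imp, forall_eq]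
  grind

lemma div_eq_div_of_notMem_tripartite_faces {G : Finset (Fin (3 * m))} (hG : G.card = 2)
    (hGX : G ∉ (tripartite m).faces) {v w : Fin (3 * m)} (hv : v ∈ G) (hw : w ∈ G) :
    v.val / m = w.val / m := by
  obtain ⟨a, b, hab, rfl⟩ := card_eq_two.1 hG
  have hdiv := not_not.1 (mt (pair_mem_tripartite_faces hab).2 hGX)
  simp only [mem_insert, mem_singleton] at hv hw
  rcases hv with rfl | rfl <;> rcases hw with rfl | rfl <;> simp [hdiv]

lemma sum_inc_fiber_eq_zero {G : Finset (Fin (3 * m))} (hG : G.card = 2)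
    (hGX : G ∉ (tripartite m).faces) (c : ℕ) :
    ∑ w with w.val / m = c, inc G {w} = 0 := by
  by_cases hc : ∃ v ∈ G, v.val / m = c
  · obtain ⟨v, hv, rfl⟩ := hc
    refine sum_inc_singleton_of_subset hG fun w hw => mem_filter.2 ⟨mem_univ w, ?_⟩
    exact div_eq_div_of_notMem_tripartite_faces hG hGX hw hv
  · exact sum_inc_singleton_of_disjoint
      (disjoint_left.2 fun w hw hw' => hc ⟨w, hw, (mem_filter.1 hw').2⟩)

variable (m) in
abbrev partMatrix (f : ℕ → ℕ → ℝ) : Matrix (Fin (3 * m)) (Fin (3 * m)) ℝ :=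
  Matrix.of fun v w => f (v.val / m) (w.val / m)

lemma smul_one_sub_partMatrix_mul_nonfaces_transpose (c : ℝ) (f : ℕ → ℕ → ℝ) :
    (c • 1 - partMatrix m f) * (edgeIncidence (· ∉ (tripartite m).faces))ᵀ
      = c • (edgeIncidence (· ∉ (tripartite m).faces))ᵀ := by
  have hf : partMatrix m f * (edgeIncidence (· ∉ (tripartite m).faces))ᵀ = 0 :=
    of_fiberwise_mul_eq_zero (fun v : Fin (3 * m) => v.val / m) f _
      fun c G => sum_inc_fiber_eq_zero G.1.2 G.2 c
  rw [Matrix.sub_mul, hf, sub_zero, Matrix.smul_mul, Matrix.one_mul]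

lemma tripartite_faces_gram :
    (edgeIncidence (· ∈ (tripartite m).faces))ᵀ * edgeIncidence (· ∈ (tripartite m).faces)
      = (2 * m : ℝ) • 1 - partMatrix m fun a b => if a = b then 0 else 1 := by
  refine edgeIncidence_gram_eq _ _ (fun v w hvw => ?_) fun v => ?_
  · simp only [of_apply, pair_mem_tripartite_faces hvw]
    split_ifs <;> simp_all
  · simp only [of_apply]
    have hcard := card_filter_add_card_filter_not (s := univ) fun w : Fin (3 * m) =>
      v.val / m = w.val / m
    rw [card_filter_div_eq_div, card_univ, Fintype.card_fin] at hcard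
    rw [sum_ite, sum_const_zero, zero_add, sum_const, nsmul_one,
      show #{w : Fin (3 * m) | ¬v.val / m = w.val / m} = 2 * m by omega]
    push_cast
    ring

lemma tripartite_nonfaces_gram :
    (edgeIncidence (· ∉ (tripartite m).faces))ᵀ * edgeIncidence (· ∉ (tripartite m).faces)
      = (m : ℝ) • 1 - partMatrix m fun a b => if a = b then 1 else 0 := by
  refine edgeIncidence_gram_eq _ _ (fun v w hvw => ?_) fun v => ?_
  · simp only [of_apply, pair_mem_tripartite_faces hvw]
    split_ifs <;> simp_all
  · simp only [of_apply]
    rw [sum_boole, card_filter_div_eq_div]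

end Tripartite

section PosSemidef

variable {n : Type*} [Fintype n] [DecidableEq n]

lemma posSemidef_smul_one_sub_of_mul_self_eq {N : Matrix n n ℝ} {t : ℝ} (hN : N.IsSymm)
    (ht : 0 < t) (hNN : N * N = t • N) : (t • 1 - N).PosSemidef := by
  have hsq : (t • 1 - N)ᴴ * (t • 1 - N) = t • (t • 1 - N) := by
    rw [conjTranspose_eq_transpose_of_trivial, transpose_sub, transpose_smul, transpose_one,
      hN.eq, Matrix.sub_mul, Matrix.mul_sub, Matrix.mul_sub, hNN]
    simp only [Matrix.smul_mul, Matrix.mul_smul, Matrix.one_mul, Matrix.mul_one, smul_sub,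
      smul_smul]
    abel
  have := (posSemidef_conjTranspose_mul_self (t • 1 - N)).smul (inv_nonneg.2 ht.le)
  rwa [hsq, smul_smul, inv_mul_cancel₀ ht.ne', one_smul] at this

lemma posSemidef_fromBlocks_smul_one_iff {m : Type*} [Fintype m] {c : ℝ} (hc : 0 < c)
    (B : Matrix n m ℝ) (D : Matrix m m ℝ) :
    (fromBlocks (c • 1) B Bᵀ D).PosSemidef ↔ (D - c⁻¹ • (Bᵀ * B)).PosSemidef := by
  have hA : (c • 1 : Matrix n n ℝ).PosDef := PosDef.one.smul hc
  let := hA.isUnit.invertible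
  have hinv : (c • 1 : Matrix n n ℝ)⁻¹ = c⁻¹ • 1 :=
    inv_eq_left_inv (by rw [smul_mul_smul, Matrix.one_mul, inv_mul_cancel₀ hc.ne', one_smul])
  rw [← conjTranspose_eq_transpose_of_trivial, PosDef.fromBlocks₁₁ B D hA, hinv,
    Matrix.mul_smul, Matrix.mul_one, Matrix.smul_mul]

end PosSemidef

/-- Writing the down-Laplacian `L↓_1` of the complete 2-complex on
`3m` vertices in blocks according to the partition of the 2-subsets into the edges of
`X = K²_{m,m,m}` and the remaining (monochromatic) pairs, as
`L↓_1 = [[L↓_1(X), M],[Mᵀ, N]]`, one has `MᵀM = 2m·N`; consequently the block matrix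
`[[2m·I, −M],[−Mᵀ, 2m·I − N]]` is positive semidefinite, since `m·I − N ⪰ 0`. -/
theorem tripartite_block_identity
    (m : ℕ) (hm : 1 ≤ m)
    (M : Matrix {F : KSet (Fin (3 * m)) 2 // F.1 ∈ (tripartite m).faces}
                {F : KSet (Fin (3 * m)) 2 // F.1 ∉ (tripartite m).faces} ℝ)
    (hM : ∀ F G, M F G = Lc (Fin (3 * m)) 2 F.1 G.1)
    (N : Matrix {F : KSet (Fin (3 * m)) 2 // F.1 ∉ (tripartite m).faces}
                {F : KSet (Fin (3 * m)) 2 // F.1 ∉ (tripartite m).faces} ℝ)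
    (hN : ∀ F G, N F G = Lc (Fin (3 * m)) 2 F.1 G.1) :
    Mᵀ * M = (2 * (m : ℝ)) • N ∧
    (Matrix.fromBlocks ((2 * (m : ℝ)) • 1) (-M) (-Mᵀ) ((2 * (m : ℝ)) • 1 - N)).PosSemidef ∧
    ((m : ℝ) • 1 - N).PosSemidef := by
  have hm' : (0 : ℝ) < m := by exact_mod_cast hm
  set DX := edgeIncidence (· ∈ (tripartite m).faces)
  set DY := edgeIncidence (· ∉ (tripartite m).faces)
  have hMD : M = DX * DYᵀ := by
    ext F G
    rw [hM, edgeIncidence_mul_transpose_apply]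
  have hND : N = DY * DYᵀ := by
    ext F G
    rw [hN, edgeIncidence_mul_transpose_apply]
  have hMtM : Mᵀ * M = (2 * (m : ℝ)) • N := by
    rw [hMD, hND, transpose_mul, transpose_transpose, Matrix.mul_assoc, ← Matrix.mul_assoc DXᵀ,
      tripartite_faces_gram, smul_one_sub_partMatrix_mul_nonfaces_transpose, Matrix.mul_smul]
  have hNN : N * N = (m : ℝ) • N := by
    rw [hND, Matrix.mul_assoc, ← Matrix.mul_assoc DYᵀ, tripartite_nonfaces_gram,
      smul_one_sub_partMatrix_mul_nonfaces_transpose, Matrix.mul_smul]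
  have hNsymm : N.IsSymm := by
    rw [hND, IsSymm, transpose_mul, transpose_transpose]
  have hPSD := posSemidef_smul_one_sub_of_mul_self_eq hNsymm hm' hNN
  refine ⟨hMtM, ?_, hPSD⟩
  rw [← transpose_neg, posSemidef_fromBlocks_smul_one_iff (by positivity), transpose_neg,
    Matrix.neg_mul, Matrix.mul_neg, neg_neg, hMtM, smul_smul, inv_mul_cancel₀ (by positivity),
    one_smul]
  convert hPSD.smul (zero_le_two (α := ℝ)) using 1
  module
end

section
/- For the complete bipartite 2-complex K²_{m,m}, the up-Laplacian L↑_1 written by blocks according to inner edges X₁^in and crossing edges X₁^out is [[m·I, −M],[−Mᵀ, 2m·I − N]] with MᵀM = m·N − 2J, and N has exactly two nonzero eigenvalues: 2m with multiplicity 1 (eigenvector all-ones) and m with multiplicity 2(m−1). -/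
open Finset Matrix

variable {V : Type} [Fintype V] [DecidableEq V] [LinearOrder V]

/-- The complete bipartite 2-complex `K²_{m,m}` on `2m` vertices: the two parts are the
fibers of `v ↦ v / m`, the 2-faces are all triangles meeting both parts, and the
1-skeleton is complete. -/
def bipartite2 (m : ℕ) : SC (Fin (2 * m)) :=
  ⟨univ.filter fun F =>
      F.card ≤ 2 ∨ (F.card = 3 ∧ ∃ v ∈ F, ∃ w ∈ F, v.val / m ≠ w.val / m), by
    intro F hF K hK
    simp only [mem_filter, mem_univ, true_and] at hF ⊢
    by_cases hc : K.card ≤ 2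
    · exact Or.inl hc
    · have hF3 : F.card ≤ 3 := by
        rcases hF with h | h
        · exact le_trans h (by norm_num)
        · exact le_of_eq h.1
      have hKF : K = F := Finset.eq_of_subset_of_card_le hK (by omega)
      rw [hKF]; exact hF⟩


/-!
Write `B_in` and `B_out` for the oriented vertex–edge incidence matrices of the inner and the
crossing edges. Two distinct edges `F, F'` meeting in a vertex `p` span the triangle `F ∪ F'`,
and `[F ∪ F' : F] [F ∪ F' : F'] = -[F : p] [F' : p]`. In `K²_{m,m}` every triangle through a
crossing edge is a face while no two inner edges span one, so, after counting the triangles on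
each edge for the diagonal, `M = B_in B_outᵀ`, `N = B_out B_outᵀ` and the inner block is `m I`.
The Gram matrices `B_inᵀ B_in = m I - P` and `B_outᵀ B_out = m I - A` are the Laplacians of
`2 K_m` and of `K_{m,m}` (`P` the same-side indicator, `A` the bipartite adjacency), and
`B_out P B_outᵀ = 2 J` because every crossing edge runs from the first part to the second; this
gives `MᵀM = m N - 2 J`. Finally `N = B_out B_outᵀ` and `B_outᵀ B_out` have the same nonzero
eigenvalues with the same multiplicities, and `A` sees a vector only through its two part sums,
so the spectrum of `m I - A` is `{0, m, 2m}`: the `2m`-eigenspace is spanned by the `±1` sign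
vector of the parts, and the `m`-eigenspace consists of the vectors with both part sums zero.
-/

section Finset

variable {α : Type} [DecidableEq α]

lemma exists_eq_pair_of_mem {F : Finset α} (hF : F.card = 2) {v : α} (hv : v ∈ F) :
    ∃ x, x ≠ v ∧ F = {v, x} := by
  obtain ⟨a, b, hab, rfl⟩ := card_eq_two.1 hF
  rcases mem_insert.1 hv with rfl | hv
  · exact ⟨b, hab.symm, rfl⟩
  · rw [mem_singleton.1 hv]
    exact ⟨a, hab, pair_comm _ _⟩

lemma three_le_card_union {F F' : Finset α} (hF : F.card = 2) (hF' : F'.card = 2)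
    (hne : F ≠ F') : 3 ≤ (F ∪ F').card := by
  by_contra! h
  have h₁ := eq_of_subset_of_card_le (subset_union_left : F ⊆ F ∪ F') (by omega)
  have h₂ := eq_of_subset_of_card_le (subset_union_right : F' ⊆ F ∪ F') (by omega)
  exact hne (h₁.trans h₂.symm)

lemma card_filter_superset [Fintype α] {S : Finset (Finset α)} {K : Finset α}
    (hS : ∀ H ∈ S, H.card = K.card + 1) :
    #{H ∈ S | K ⊆ H} = #{x | x ∉ K ∧ insert x K ∈ S} := by
  symm
  refine card_bij (fun x _ => insert x K) (fun x hx => ?_) (fun x hx y _ hxy => ?_)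
    (fun H hH => ?_)
  · simp only [mem_filter, mem_univ, true_and] at hx ⊢
    exact ⟨hx.2, subset_insert x K⟩
  · simp only [mem_filter, mem_univ, true_and] at hx
    rcases mem_insert.1 (hxy ▸ mem_insert_self x K) with h | h
    · exact h
    · exact absurd h hx.1
  · obtain ⟨hHS, hKH⟩ := mem_filter.1 hH
    obtain ⟨x, hx⟩ : ∃ x, H \ K = {x} :=
      card_eq_one.1 (by rw [card_sdiff_of_subset hKH, hS H hHS]; omega)
    have hxK : x ∉ K := (mem_sdiff.1 (hx ▸ mem_singleton_self x)).2
    have hH : insert x K = H := by rw [← sdiff_union_of_subset hKH, hx]; rfl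
    exact ⟨x, mem_filter.2 ⟨mem_univ _, hxK, hH ▸ hHS⟩, hH⟩

end Finset

def ordSign {α : Type} [LinearOrder α] (y x : α) : ℝ := if y < x then -1 else 1

lemma ordSign_mul_self {α : Type} [LinearOrder α] (y x : α) : ordSign y x * ordSign y x = 1 := by
  unfold ordSign
  split_ifs <;> norm_num

lemma ordSign_mul_ordSign_swap {α : Type} [LinearOrder α] {x y : α} (h : x ≠ y) :
    ordSign x y * ordSign y x = -1 := by
  unfold ordSign
  rcases h.lt_or_gt with h | h <;> simp [h, h.not_gt]

section Incidence

variable {α : Type} [DecidableEq α] [LinearOrder α]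

lemma inc_insert_s15 {x : α} {K : Finset α} (hx : x ∉ K) :
    inc (insert x K) K = ∏ y ∈ K, ordSign y x := by
  rw [inc, if_pos ⟨subset_insert x K, card_insert_of_notMem hx⟩, insert_sdiff_cancel hx,
    sum_singleton]
  simp only [ordSign, prod_ite, prod_const, one_pow, mul_one]

lemma inc_pair_left_s15 {x y : α} (h : x ≠ y) : inc {x, y} {x} = ordSign x y := by
  rw [pair_comm, inc_insert_s15 (by simpa using h.symm), prod_singleton]

lemma inc_eq_zero_of_not_subset {F K : Finset α} (h : ¬ K ⊆ F) : inc F K = 0 :=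
  if_neg fun hc => h hc.1

lemma mem_of_inc_singleton_ne_zero {F : Finset α} {v : α} (h : inc F {v} ≠ 0) : v ∈ F := by
  by_contra hv
  exact h (inc_eq_zero_of_not_subset (by simpa using hv))

lemma inc_mul_self_s15 {F K : Finset α} (hKF : K ⊆ F) (hcard : F.card = K.card + 1) :
    inc F K * inc F K = 1 := by
  obtain ⟨x, hx⟩ : ∃ x, F \ K = {x} := card_eq_one.1 (by rw [card_sdiff_of_subset hKF]; omega)
  have hxK : x ∉ K := (mem_sdiff.1 (hx ▸ mem_singleton_self x)).2
  have hF : F = insert x K := by rw [← sdiff_union_of_subset hKF, hx]; rfl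
  rw [hF, inc_insert_s15 hxK, ← prod_mul_distrib]
  exact prod_eq_one fun y _ => ordSign_mul_self y x

lemma inc_singleton_mul_self {F : Finset α} (hF : F.card = 2) (v : α) :
    inc F {v} * inc F {v} = if v ∈ F then 1 else 0 := by
  split_ifs with hv
  · exact inc_mul_self_s15 (singleton_subset_iff.2 hv) (by simp [hF])
  · rw [inc_eq_zero_of_not_subset (by simpa using hv), mul_zero]

lemma sum_inc_singleton_mul_self [Fintype α] {F : Finset α} (hF : F.card = 2) :
    ∑ v, inc F {v} * inc F {v} = 2 := by
  simp [inc_singleton_mul_self hF, hF]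

lemma sum_inc_pair_mul [Fintype α] {a b : α} (hab : a < b) (x : α → ℝ) :
    ∑ v, inc {a, b} {v} * x v = x b - x a := by
  rw [Fintype.sum_eq_add a b hab.ne fun v hv => by
      rw [inc_eq_zero_of_not_subset (by simpa using hv), zero_mul],
    inc_pair_left_s15 hab.ne, pair_comm, inc_pair_left_s15 hab.ne']
  simp [ordSign, hab, hab.not_gt]
  ring

lemma inc_triangle_mul {p q r : α} (hpq : p ≠ q) (hpr : p ≠ r) (hqr : q ≠ r) :
    inc {p, q, r} {p, q} * inc {p, q, r} {p, r} = -(inc {p, q} {p} * inc {p, r} {p}) := by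
  have h₁ : ({p, q, r} : Finset α) = insert r {p, q} := by ext; simp; tauto
  have h₂ : ({p, q, r} : Finset α) = insert q {p, r} := by ext; simp; tauto
  rw [h₁, inc_insert_s15 (by simp [hpr.symm, hqr.symm]), ← h₁, h₂,
    inc_insert_s15 (by simp [hpq.symm, hqr]), prod_pair hpq, prod_pair hpr, inc_pair_left_s15 hpq,
    inc_pair_left_s15 hpr]
  linear_combination (ordSign p r * ordSign p q) * ordSign_mul_ordSign_swap hqr

lemma mem_inter_of_inc_mul_inc_ne_zero {F F' : Finset α} {v : α}
    (h : inc F {v} * inc F' {v} ≠ 0) : v ∈ F ∩ F' :=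
  mem_inter.2 ⟨mem_of_inc_singleton_ne_zero (left_ne_zero_of_mul h),
    mem_of_inc_singleton_ne_zero (right_ne_zero_of_mul h)⟩

lemma eq_pair_of_inc_mul_inc_ne_zero {F : Finset α} (hF : F.card = 2) {v w : α} (hvw : v ≠ w)
    (h : inc F {v} * inc F {w} ≠ 0) : F = {v, w} := by
  have hv := mem_of_inc_singleton_ne_zero (left_ne_zero_of_mul h)
  have hw := mem_of_inc_singleton_ne_zero (right_ne_zero_of_mul h)
  exact (eq_of_subset_of_card_le (insert_subset hv (singleton_subset_iff.2 hw))
    (by rw [hF, card_pair hvw])).symm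

lemma union_eq_of_inc_mul_inc_ne_zero {H F F' : Finset α} (hH : H.card = 3)
    (hF : F.card = 2) (hF' : F'.card = 2) (hne : F ≠ F') (h : inc H F * inc H F' ≠ 0) :
    F ∪ F' = H := by
  have hFH : F ⊆ H := by
    by_contra hc
    exact h (by rw [inc_eq_zero_of_not_subset hc, zero_mul])
  have hF'H : F' ⊆ H := by
    by_contra hc
    exact h (by rw [inc_eq_zero_of_not_subset hc, mul_zero])
  exact eq_of_subset_of_card_le (union_subset hFH hF'H) (hH ▸ three_le_card_union hF hF' hne)

end Incidence

section UpLaplacian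

variable {α : Type} [Fintype α] [DecidableEq α] [LinearOrder α] (X : SC α)

lemma LupE_two_apply_self (F : KSet α 2) : LupE X 2 F F = #{H ∈ X.dfaces 3 | F.1 ⊆ H} := by
  rw [LupE, ← sum_boole]
  refine sum_congr rfl fun H hH => ?_
  split_ifs with h
  · exact inc_mul_self_s15 h (by rw [(mem_filter.1 hH).2, F.2])
  · rw [inc_eq_zero_of_not_subset h, mul_zero]

lemma LupE_two_apply_eq_zero {F F' : KSet α 2} (hne : F ≠ F')
    (h : F.1 ∪ F'.1 ∉ X.dfaces 3) : LupE X 2 F F' = 0 :=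
  sum_eq_zero fun _ hH => by_contra fun h0 => h <|
    union_eq_of_inc_mul_inc_ne_zero (mem_filter.1 hH).2 F.2 F'.2
      (fun e => hne (Subtype.ext e)) h0 ▸ hH

lemma LupE_two_apply_eq_neg_sum {F F' : KSet α 2} (hne : F ≠ F')
    (h : (F.1 ∪ F'.1).card = 3 → F.1 ∪ F'.1 ∈ X.dfaces 3) :
    LupE X 2 F F' = -∑ v, inc F.1 {v} * inc F'.1 {v} := by
  have hne' : F.1 ≠ F'.1 := fun e => hne (Subtype.ext e)
  have hcard := card_union_add_card_inter F.1 F'.1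
  rw [F.2, F'.2] at hcard
  by_cases h3 : (F.1 ∪ F'.1).card = 3
  · obtain ⟨p, hp⟩ : ∃ p, F.1 ∩ F'.1 = {p} := card_eq_one.1 (by omega)
    have hsum : ∑ v, inc F.1 {v} * inc F'.1 {v} = inc F.1 {p} * inc F'.1 {p} :=
      Fintype.sum_eq_single p fun v hv => by_contra fun h0 => hv <| by
        simpa [hp] using mem_inter_of_inc_mul_inc_ne_zero h0
    obtain ⟨hpF, hpF'⟩ := mem_inter.1 (hp ▸ mem_singleton_self p)
    obtain ⟨q, hqp, hFq⟩ := exists_eq_pair_of_mem F.2 hpF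
    obtain ⟨r, hrp, hFr⟩ := exists_eq_pair_of_mem F'.2 hpF'
    have hqr : q ≠ r := by
      rintro rfl
      exact hne' (hFq.trans hFr.symm)
    have hunion : F.1 ∪ F'.1 = {p, q, r} := by
      rw [hFq, hFr]
      ext
      simp
    rw [LupE, sum_eq_single_of_mem _ (h h3) fun H hH hH' => by_contra fun h0 => hH' <|
      (union_eq_of_inc_mul_inc_ne_zero (mem_filter.1 hH).2 F.2 F'.2 hne' h0).symm,
      hsum, hunion, hFq, hFr, inc_triangle_mul hqp.symm hrp.symm hqr]
  · have hdisj : F.1 ∩ F'.1 = ∅ :=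
      card_eq_zero.1 (by have := three_le_card_union F.2 F'.2 hne'; omega)
    rw [LupE_two_apply_eq_zero X hne fun hm => h3 (mem_filter.1 hm).2, eq_comm, neg_eq_zero]
    exact sum_eq_zero fun v _ => by_contra fun h0 => by
      simpa [hdisj] using mem_inter_of_inc_mul_inc_ne_zero h0

end UpLaplacian

section EdgeIncidence

variable {α : Type} [Fintype α] [DecidableEq α]

lemma sum_edges_eq_sum_filter (P : Finset α → Prop) [DecidablePred P]
    [Fintype {F : KSet α 2 // P F.1}] (f : Finset α → ℝ) :
    ∑ F : {F : KSet α 2 // P F.1}, f F.1.1 = ∑ F with F.card = 2 ∧ P F, f F := by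
  rw [sum_subtype (p := fun F : Finset α => F.card = 2 ∧ P F) _ (by simp)]
  exact Fintype.sum_equiv (Equiv.subtypeSubtypeEquivSubtypeInter _ _) _ _ fun _ => rfl

variable [LinearOrder α]

def edgeInc (P : Finset α → Prop) : Matrix {F : KSet α 2 // P F.1} α ℝ :=
  of fun F v => inc F.1.1 {v}

lemma edgeInc_transpose_mul_self_apply (P : Finset α → Prop) [DecidablePred P]
    [Fintype {F : KSet α 2 // P F.1}] (v w : α) :
    ((edgeInc P)ᵀ * edgeInc P) v w =
      if v = w then (#{x | x ≠ v ∧ P {x, v}} : ℝ) else if P {v, w} then -1 else 0 := by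
  simp only [mul_apply, transpose_apply, edgeInc, of_apply]
  rw [sum_edges_eq_sum_filter P fun F => inc F {v} * inc F {w}]
  split_ifs with hvw hP
  · subst hvw
    rw [sum_congr rfl fun F hF => inc_singleton_mul_self (mem_filter.1 hF).2.1 v, sum_boole]
    simp_rw [← singleton_subset_iff]
    rw [card_filter_superset fun H hH => by simp [(mem_filter.1 hH).2.1]]
    congr 2
    ext x
    simp +contextual
  · rw [sum_eq_single_of_mem {v, w} (by simp [card_pair hvw, hP]) fun F hF hFvw =>
      by_contra fun h0 => hFvw (eq_pair_of_inc_mul_inc_ne_zero (mem_filter.1 hF).2.1 hvw h0),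
      inc_pair_left_s15 hvw, pair_comm, inc_pair_left_s15 (Ne.symm hvw), ordSign_mul_ordSign_swap hvw]
  · exact sum_eq_zero fun F hF => by_contra fun h0 => hP <|
      eq_pair_of_inc_mul_inc_ne_zero (mem_filter.1 hF).2.1 hvw h0 ▸ (mem_filter.1 hF).2.2

end EdgeIncidence

section Eigenspaces

variable {K M N : Type*} [Field K] [AddCommGroup M] [Module K M] [AddCommGroup N] [Module K N]
  (f : M →ₗ[K] N) (g : N →ₗ[K] M) {μ : K}

/-- For `μ ≠ 0`, `g` and `μ⁻¹ • f` are mutually inverse between the two eigenspaces. -/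
lemma finrank_eigenspace_comp_comm (hμ : μ ≠ 0) :
    Module.finrank K (Module.End.eigenspace (f ∘ₗ g) μ) =
      Module.finrank K (Module.End.eigenspace (g ∘ₗ f) μ) := by
  have hg : ∀ x ∈ Module.End.eigenspace (f ∘ₗ g) μ,
      g x ∈ Module.End.eigenspace (g ∘ₗ f) μ := by
    intro x hx
    rw [Module.End.mem_eigenspace_iff] at hx ⊢
    rw [LinearMap.comp_apply, ← LinearMap.comp_apply f g, hx, map_smul]
  have hf : ∀ y ∈ Module.End.eigenspace (g ∘ₗ f) μ,
      (μ⁻¹ • f) y ∈ Module.End.eigenspace (f ∘ₗ g) μ := by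
    intro y hy
    rw [Module.End.mem_eigenspace_iff] at hy ⊢
    rw [LinearMap.smul_apply, map_smul, LinearMap.comp_apply, ← LinearMap.comp_apply g f, hy,
      map_smul, smul_comm]
  refine LinearEquiv.finrank_eq (LinearEquiv.ofLinearMap (f := g.restrict hg)
    (g := (μ⁻¹ • f).restrict hf) ?_ ?_) <;> ext ⟨x, hx⟩ <;>
    replace hx := Module.End.mem_eigenspace_iff.1 hx
  · show g ((μ⁻¹ • f) x) = x
    rw [LinearMap.smul_apply, map_smul, ← LinearMap.comp_apply g f, hx, inv_smul_smul₀ hμ]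
  · show (μ⁻¹ • f) (g x) = x
    rw [LinearMap.smul_apply, ← LinearMap.comp_apply f g, hx, inv_smul_smul₀ hμ]

lemma hasEigenvalue_comp_comm (hμ : μ ≠ 0) (h : Module.End.HasEigenvalue (f ∘ₗ g) μ) :
    Module.End.HasEigenvalue (g ∘ₗ f) μ := by
  obtain ⟨x, hx, hx0⟩ := h.exists_hasEigenvector
  rw [Module.End.mem_eigenspace_iff, LinearMap.comp_apply] at hx
  refine Module.End.hasEigenvalue_of_hasEigenvector (x := g x)
    ⟨Module.End.mem_eigenspace_iff.2 ?_, fun h0 => hx0 ?_⟩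
  · rw [LinearMap.comp_apply, hx, map_smul]
  · rw [h0, map_zero, eq_comm, smul_eq_zero] at hx
    exact hx.resolve_left hμ

end Eigenspaces

lemma mem_eigenspace_smul_one_sub_iff {ι : Type} [Fintype ι] [DecidableEq ι]
    (A : Matrix ι ι ℝ) (c μ : ℝ) (x : ι → ℝ) :
    x ∈ Module.End.eigenspace (mulVecLin (c • 1 - A)) μ ↔ A *ᵥ x = (c - μ) • x := by
  rw [Module.End.mem_eigenspace_iff, mulVecLin_apply, sub_mulVec, smul_mulVec, one_mulVec,
    sub_smul]
  constructor <;> intro h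
  · rw [← h]; abel
  · rw [h]; abel

section CompleteBipartite

variable {ι : Type} [Fintype ι] (p : ι → Prop) [DecidablePred p]

def crossAdj : Matrix ι ι ℝ := of fun i j => if (p i ↔ p j) then 0 else 1

def sideSign : ι → ℝ := fun i => if p i then 1 else -1

def partSum : (ι → ℝ) →ₗ[ℝ] ℝ := ∑ j with p j, LinearMap.proj j

lemma partSum_apply (x : ι → ℝ) : partSum p x = ∑ j with p j, x j := by
  simp [partSum]

lemma crossAdj_mulVec_apply (x : ι → ℝ) (i : ι) :
    (crossAdj p *ᵥ x) i = if p i then partSum (¬ p ·) x else partSum p x := by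
  simp only [mulVec, dotProduct, crossAdj, of_apply, ite_mul, zero_mul, one_mul,
    partSum_apply, sum_filter]
  split_ifs with hi <;> simp [hi, ite_not]

lemma partSum_eq_card_mul {q : ι → Prop} [DecidablePred q] {x : ι → ℝ} {a : ℝ}
    (h : ∀ i, q i → x i = a) : partSum q x = #{i | q i} * a := by
  rw [partSum_apply, sum_congr rfl fun i hi => h i (mem_filter.1 hi).2, sum_const,
    nsmul_eq_mul]

variable {p} {m : ℕ}

lemma crossAdj_mulVec_sideSign (hp : #{i | p i} = m) (hnp : #{i | ¬ p i} = m) :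
    crossAdj p *ᵥ sideSign p = -(m : ℝ) • sideSign p := by
  have hpos : partSum p (sideSign p) = m := by
    simpa [hp] using partSum_eq_card_mul (x := sideSign p) (a := 1) fun i hi => if_pos hi
  have hneg : partSum (¬ p ·) (sideSign p) = -m := by
    simpa [hnp] using partSum_eq_card_mul (x := sideSign p) (a := -1) fun i hi => if_neg hi
  ext i
  rw [crossAdj_mulVec_apply, Pi.smul_apply, sideSign]
  split_ifs <;> simp [hpos, hneg]

lemma eigenvalue_smul_one_sub_crossAdj [DecidableEq ι] (hp : #{i | p i} = m)
    (hnp : #{i | ¬ p i} = m) {μ : ℝ}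
    (h : Module.End.HasEigenvalue (mulVecLin ((m : ℝ) • 1 - crossAdj p)) μ) :
    μ = 0 ∨ μ = m ∨ μ = 2 * m := by
  obtain ⟨x, hx, hx0⟩ := h.exists_hasEigenvector
  rw [mem_eigenspace_smul_one_sub_iff] at hx
  set c := (m : ℝ) - μ
  have hpart : ∀ i, p i → (crossAdj p *ᵥ x) i = partSum (¬ p ·) x := fun i hi => by
    rw [crossAdj_mulVec_apply, if_pos hi]
  have hpart' : ∀ i, ¬ p i → (crossAdj p *ᵥ x) i = partSum p x := fun i hi => by
    rw [crossAdj_mulVec_apply, if_neg hi]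
  have h₁ := congrArg (partSum p) hx
  rw [partSum_eq_card_mul hpart, hp, map_smul, smul_eq_mul] at h₁
  have h₂ := congrArg (partSum (¬ p ·)) hx
  rw [partSum_eq_card_mul hpart', hnp, map_smul, smul_eq_mul] at h₂
  by_cases hst : partSum p x = 0 ∧ partSum (¬ p ·) x = 0
  · have hAx : crossAdj p *ᵥ x = 0 := funext fun i => by
      rw [crossAdj_mulVec_apply]; split_ifs <;> simp [hst]
    rw [hAx, eq_comm, smul_eq_zero] at hx
    exact Or.inr (Or.inl (by linarith [hx.resolve_right hx0]))
  · have hc : c ^ 2 - (m : ℝ) ^ 2 = 0 := by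
      rcases not_and_or.1 hst with hs | ht
      · exact (mul_eq_zero.1 (by linear_combination (-c) * h₁ - (m : ℝ) * h₂ :
          (c ^ 2 - (m : ℝ) ^ 2) * partSum p x = 0)).resolve_right hs
      · exact (mul_eq_zero.1 (by linear_combination (-c) * h₂ - (m : ℝ) * h₁ :
          (c ^ 2 - (m : ℝ) ^ 2) * partSum (¬ p ·) x = 0)).resolve_right ht
    rcases mul_eq_zero.1 (by linear_combination hc : (c - m) * (c + m) = 0) with h | h
    · exact Or.inl (by linarith)
    · exact Or.inr (Or.inr (by linarith))

variable [DecidableEq ι]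

lemma eigenspace_smul_one_sub_crossAdj_two_mul (hp : #{i | p i} = m) (hnp : #{i | ¬ p i} = m)
    (hm : m ≠ 0) :
    Module.End.eigenspace (mulVecLin ((m : ℝ) • 1 - crossAdj p)) (2 * m : ℝ) =
      Submodule.span ℝ {sideSign p} := by
  have hm' : (m : ℝ) ≠ 0 := Nat.cast_ne_zero.2 hm
  ext x
  rw [mem_eigenspace_smul_one_sub_iff, Submodule.mem_span_singleton,
    show (m : ℝ) - 2 * m = -m by ring]
  constructor
  · intro h
    set c := -partSum (¬ p ·) x / m
    have hpos : ∀ i, p i → x i = c := fun i hi => by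
      have := congrFun h i
      rw [crossAdj_mulVec_apply, if_pos hi, Pi.smul_apply, smul_eq_mul] at this
      rw [eq_div_iff hm']; linarith
    have hs : partSum p x = m * c := by rw [partSum_eq_card_mul hpos, hp]
    refine ⟨c, funext fun i => ?_⟩
    have := congrFun h i
    rw [crossAdj_mulVec_apply, Pi.smul_apply, smul_eq_mul] at this
    by_cases hi : p i
    · simp [sideSign, hi, hpos i hi]
    · rw [if_neg hi, hs] at this
      rw [Pi.smul_apply, sideSign, if_neg hi, smul_eq_mul, mul_neg_one]
      exact mul_left_cancel₀ hm' (by linarith)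
  · rintro ⟨a, rfl⟩
    rw [mulVec_smul, crossAdj_mulVec_sideSign hp hnp, smul_comm]

lemma finrank_eigenspace_smul_one_sub_crossAdj_two_mul (hp : #{i | p i} = m)
    (hnp : #{i | ¬ p i} = m) (hm : m ≠ 0) :
    Module.finrank ℝ
      (Module.End.eigenspace (mulVecLin ((m : ℝ) • 1 - crossAdj p)) (2 * m : ℝ)) = 1 := by
  obtain ⟨i, -⟩ := card_pos.1 (hp ▸ Nat.pos_of_ne_zero hm)
  rw [eigenspace_smul_one_sub_crossAdj_two_mul hp hnp hm, finrank_span_singleton]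
  intro h
  have := congrFun h i
  simp only [sideSign, Pi.zero_apply] at this
  split_ifs at this <;> norm_num at this

lemma eigenspace_smul_one_sub_crossAdj_self {i₀ j₀ : ι} (hi₀ : p i₀) (hj₀ : ¬ p j₀) :
    Module.End.eigenspace (mulVecLin ((m : ℝ) • 1 - crossAdj p)) (m : ℝ) =
      LinearMap.ker ((partSum p).prod (partSum (¬ p ·))) := by
  ext x
  rw [mem_eigenspace_smul_one_sub_iff, sub_self, zero_smul, LinearMap.mem_ker]
  change _ ↔ (partSum p x, partSum (¬ p ·) x) = 0
  rw [Prod.mk_eq_zero]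
  constructor
  · intro h
    have h₁ := congrFun h i₀
    have h₂ := congrFun h j₀
    rw [crossAdj_mulVec_apply, if_pos hi₀] at h₁
    rw [crossAdj_mulVec_apply, if_neg hj₀] at h₂
    exact ⟨h₂, h₁⟩
  · rintro ⟨hs, ht⟩
    ext i
    rw [crossAdj_mulVec_apply]
    split_ifs <;> simp [hs, ht]

lemma finrank_eigenspace_smul_one_sub_crossAdj_self (hp : #{i | p i} = m)
    (hnp : #{i | ¬ p i} = m) (hm : m ≠ 0) :
    Module.finrank ℝ (Module.End.eigenspace (mulVecLin ((m : ℝ) • 1 - crossAdj p)) (m : ℝ)) =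
      2 * (m - 1) := by
  have hm' : (m : ℝ) ≠ 0 := Nat.cast_ne_zero.2 hm
  obtain ⟨i₀, hi₀⟩ := card_pos.1 (hp ▸ Nat.pos_of_ne_zero hm)
  obtain ⟨j₀, hj₀⟩ := card_pos.1 (hnp ▸ Nat.pos_of_ne_zero hm)
  let L := (partSum p).prod (partSum (¬ p ·))
  have hsurj : Function.Surjective L := fun ⟨a, b⟩ => by
    refine ⟨fun i => if p i then a / m else b / m, Prod.ext ?_ ?_⟩
    · change partSum p _ = a
      rw [partSum_eq_card_mul fun i hi => if_pos hi, hp]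
      field_simp
    · change partSum (¬ p ·) _ = b
      rw [partSum_eq_card_mul fun i hi => if_neg hi, hnp]
      field_simp
  have hcard : Fintype.card ι = 2 * m := by
    rw [← card_univ, ← card_filter_add_card_filter_not (p := p), hp, hnp]; ring
  have := L.finrank_range_add_finrank_ker
  rw [LinearMap.range_eq_top.2 hsurj, finrank_top, Module.finrank_prod, Module.finrank_self,
    Module.finrank_fintype_fun_eq_card, hcard,
    ← eigenspace_smul_one_sub_crossAdj_self (m := m) (mem_filter.1 hi₀).2 (mem_filter.1 hj₀).2]
    at this
  omega

end CompleteBipartite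

section Bipartite

variable {m : ℕ}

lemma val_div_eq_val_div_iff (v w : Fin (2 * m)) :
    v.val / m = w.val / m ↔ (v.val < m ↔ w.val < m) := by
  have key : ∀ u : Fin (2 * m), u.val / m = if u.val < m then 0 else 1 := fun u => by
    split_ifs with h
    · exact Nat.div_eq_of_lt h
    · exact Nat.div_eq_of_lt_le (by omega) (by have := u.isLt; omega)
  rw [key, key]
  split_ifs <;> simp <;> omega

lemma card_val_lt : #{v : Fin (2 * m) | v.val < m} = m := by
  rw [Fin.card_filter_val_lt]
  omega

lemma card_not_val_lt : #{v : Fin (2 * m) | ¬ v.val < m} = m := by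
  have := card_filter_add_card_filter_not (s := univ) fun v : Fin (2 * m) => v.val < m
  rw [card_val_lt, card_univ, Fintype.card_fin] at this
  omega

lemma card_val_div_eq (v : Fin (2 * m)) : #{x : Fin (2 * m) | x.val / m = v.val / m} = m := by
  simp_rw [val_div_eq_val_div_iff]
  by_cases hv : v.val < m
  · simpa [hv] using card_val_lt
  · simpa [hv] using card_not_val_lt

lemma card_val_div_ne (v : Fin (2 * m)) : #{x : Fin (2 * m) | x.val / m ≠ v.val / m} = m := by
  simp_rw [ne_eq, val_div_eq_val_div_iff]
  by_cases hv : v.val < m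
  · simpa [hv] using card_not_val_lt
  · simpa [hv] using card_val_lt

lemma card_ne_and_val_div_eq (v : Fin (2 * m)) :
    #{x : Fin (2 * m) | x ≠ v ∧ x.val / m = v.val / m} = m - 1 := by
  have : ({x | x ≠ v ∧ x.val / m = v.val / m} : Finset (Fin (2 * m))) =
      ({x | x.val / m = v.val / m} : Finset (Fin (2 * m))).erase v := by
    ext; simp
  rw [this, card_erase_of_mem (by simp), card_val_div_eq]

lemma card_ne_and_val_div_ne (v : Fin (2 * m)) :
    #{x : Fin (2 * m) | x ≠ v ∧ x.val / m ≠ v.val / m} = m := by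
  refine (congrArg card (filter_congr fun x _ => ?_)).trans (card_val_div_ne v)
  exact and_iff_right_of_imp fun h hxv => h (hxv ▸ rfl)

abbrev IsInner (m : ℕ) (F : Finset (Fin (2 * m))) : Prop :=
  ∀ v ∈ F, ∀ w ∈ F, v.val / m = w.val / m

abbrev IsCross (m : ℕ) (F : Finset (Fin (2 * m))) : Prop := ¬ IsInner m F

lemma isInner_pair (a b : Fin (2 * m)) : IsInner m {a, b} ↔ a.val / m = b.val / m := by
  refine ⟨fun h => h a (by simp) b (by simp), fun h v hv w hw => ?_⟩
  simp only [mem_insert, mem_singleton] at hv hw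
  rcases hv with rfl | rfl <;> rcases hw with rfl | rfl <;> simp [h]

lemma IsInner.mono {F H : Finset (Fin (2 * m))} (hH : IsInner m H) (hFH : F ⊆ H) : IsInner m F :=
  fun v hv w hw => hH v (hFH hv) w (hFH hw)

lemma IsInner.union {F F' : Finset (Fin (2 * m))} (hF : IsInner m F) (hF' : IsInner m F')
    (hFF' : (F ∩ F').Nonempty) : IsInner m (F ∪ F') := by
  obtain ⟨u, hu⟩ := hFF'
  have hside : ∀ v ∈ F ∪ F', v.val / m = u.val / m := fun v hv => by
    rcases mem_union.1 hv with h | h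
    exacts [hF v h u (mem_inter.1 hu).1, hF' v h u (mem_inter.1 hu).2]
  exact fun v hv w hw => (hside v hv).trans (hside w hw).symm

lemma mem_bipartite2_dfaces_three {H : Finset (Fin (2 * m))} :
    H ∈ (bipartite2 m).dfaces 3 ↔ H.card = 3 ∧ IsCross m H := by
  simp only [SC.dfaces, bipartite2, mem_filter, mem_univ, true_and, not_forall,
    exists_prop]
  constructor
  · rintro ⟨h | h, h3⟩
    · omega
    · exact ⟨h3, h.2⟩
  · rintro ⟨h3, h⟩
    exact ⟨Or.inr ⟨h3, h⟩, h3⟩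

lemma exists_eq_pair_of_isCross {G : Finset (Fin (2 * m))} (hG : G.card = 2)
    (hcross : IsCross m G) : ∃ a b : Fin (2 * m), a.val < m ∧ m ≤ b.val ∧ G = {a, b} := by
  obtain ⟨x, y, -, rfl⟩ := card_eq_two.1 hG
  rw [IsCross, isInner_pair, val_div_eq_val_div_iff] at hcross
  by_cases hx : x.val < m
  · exact ⟨x, y, hx, by omega, rfl⟩
  · exact ⟨y, x, by omega, by omega, pair_comm x y⟩

end Bipartite

section BipartiteLaplacian

variable {m : ℕ}

lemma card_triangles_of_isInner {F : Finset (Fin (2 * m))} (hF : F.card = 2)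
    (hin : IsInner m F) : #{H ∈ (bipartite2 m).dfaces 3 | F ⊆ H} = m := by
  obtain ⟨a, b, hab, rfl⟩ := card_eq_two.1 hF
  rw [isInner_pair] at hin
  rw [card_filter_superset fun H hH => by rw [(mem_filter.1 hH).2, hF]]
  refine (congrArg card (filter_congr fun x _ => ?_)).trans (card_val_div_ne a)
  constructor
  · rintro ⟨-, hx⟩ heq
    have hsplit : insert x {a, b} = ({x, a} ∪ {a, b} : Finset (Fin (2 * m))) := by
      ext; simp
    rw [mem_bipartite2_dfaces_three, hsplit] at hx
    exact hx.2 (((isInner_pair x a).2 heq).union ((isInner_pair a b).2 hin) ⟨a, by simp⟩)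
  · intro hne
    have hx : x ∉ ({a, b} : Finset (Fin (2 * m))) := by
      simp only [mem_insert, mem_singleton, not_or]
      exact ⟨fun h => hne (h ▸ rfl), fun h => hne (h ▸ hin.symm)⟩
    refine ⟨hx, mem_bipartite2_dfaces_three.2
      ⟨by rw [card_insert_of_notMem hx, hF], fun h => ?_⟩⟩
    exact hne ((isInner_pair x a).1 (h.mono (by intro y; simp; tauto)))

lemma card_triangles_of_isCross {G : Finset (Fin (2 * m))} (hG : G.card = 2)
    (hcross : IsCross m G) : #{H ∈ (bipartite2 m).dfaces 3 | G ⊆ H} = 2 * m - 2 := by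
  rw [card_filter_superset fun H hH => by rw [(mem_filter.1 hH).2, hG]]
  have hiff : ∀ x, x ∉ G ∧ insert x G ∈ (bipartite2 m).dfaces 3 ↔ x ∉ G := fun x =>
    ⟨And.left, fun hx => ⟨hx, mem_bipartite2_dfaces_three.2
      ⟨by rw [card_insert_of_notMem hx, hG], fun h => hcross (h.mono (subset_insert x G))⟩⟩⟩
  simp_rw [hiff]
  rw [filter_not, filter_mem_eq_inter, univ_inter, card_univ_sdiff, hG, Fintype.card_fin]

lemma LupE_bipartite2_of_isInner {F F' : KSet (Fin (2 * m)) 2} (hF : IsInner m F.1)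
    (hF' : IsInner m F'.1) : LupE (bipartite2 m) 2 F F' = if F = F' then (m : ℝ) else 0 := by
  split_ifs with h
  · rw [h, LupE_two_apply_self, card_triangles_of_isInner F'.2 hF']
  · refine LupE_two_apply_eq_zero _ h fun hH => ?_
    obtain ⟨h3, hcross⟩ := mem_bipartite2_dfaces_three.1 hH
    have hcard := card_union_add_card_inter F.1 F'.1
    rw [F.2, F'.2, h3] at hcard
    exact hcross (hF.union hF' (card_pos.1 (by omega)))

lemma LupE_bipartite2_of_isCross {F G : KSet (Fin (2 * m)) 2} (hne : F ≠ G)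
    (hG : IsCross m G.1) :
    LupE (bipartite2 m) 2 F G = -∑ v, inc F.1 {v} * inc G.1 {v} :=
  LupE_two_apply_eq_neg_sum _ hne fun h3 =>
    mem_bipartite2_dfaces_three.2 ⟨h3, fun h => hG (h.mono subset_union_right)⟩

def sameSide (m : ℕ) : Matrix (Fin (2 * m)) (Fin (2 * m)) ℝ :=
  of fun v w => if v.val / m = w.val / m then 1 else 0

lemma edgeInc_isCross_mul_transpose_apply (G G' : {F : KSet (Fin (2 * m)) 2 // IsCross m F.1}) :
    (edgeInc (IsCross m) * (edgeInc (IsCross m))ᵀ) G G' =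
      (if G = G' then 2 * (m : ℝ) else 0) - LupE (bipartite2 m) 2 G.1 G'.1 := by
  simp only [mul_apply, transpose_apply, edgeInc, of_apply]
  split_ifs with h
  · have h2m : 2 ≤ 2 * m := by
      simpa [G.1.2] using card_le_univ G.1.1
    rw [h, LupE_two_apply_self, card_triangles_of_isCross G'.1.2 G'.2,
      sum_inc_singleton_mul_self G'.1.2, Nat.cast_sub h2m]
    push_cast; ring
  · rw [LupE_bipartite2_of_isCross (fun e => h (Subtype.ext e)) G'.2]
    ring

lemma edgeInc_isInner_mul_transpose_apply (F : {F : KSet (Fin (2 * m)) 2 // IsInner m F.1})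
    (G : {F : KSet (Fin (2 * m)) 2 // IsCross m F.1}) :
    (edgeInc (IsInner m) * (edgeInc (IsCross m))ᵀ) F G = -LupE (bipartite2 m) 2 F.1 G.1 := by
  simp only [mul_apply, transpose_apply, edgeInc, of_apply]
  rw [LupE_bipartite2_of_isCross (fun e => G.2 (by rw [← e]; exact F.2)) G.2, neg_neg]

lemma edgeInc_isInner_transpose_mul_self :
    (edgeInc (IsInner m))ᵀ * edgeInc (IsInner m) = (m : ℝ) • 1 - sameSide m := by
  ext v w
  rw [edgeInc_transpose_mul_self_apply]
  simp only [isInner_pair, Matrix.sub_apply, Matrix.smul_apply, one_apply, sameSide, of_apply,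
    smul_eq_mul]
  by_cases hvw : v = w
  · subst hvw
    have hm : 1 ≤ m := by have := v.isLt; omega
    simp [card_ne_and_val_div_eq, Nat.cast_sub hm]
  · split_ifs <;> simp

lemma edgeInc_isCross_transpose_mul_self :
    (edgeInc (IsCross m))ᵀ * edgeInc (IsCross m) =
      (m : ℝ) • 1 - crossAdj fun v : Fin (2 * m) => v.val < m := by
  ext v w
  rw [edgeInc_transpose_mul_self_apply]
  simp only [IsCross, isInner_pair, Matrix.sub_apply, Matrix.smul_apply, one_apply, crossAdj,
    of_apply, smul_eq_mul]
  by_cases hvw : v = w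
  · subst hvw
    simp [card_ne_and_val_div_ne]
  · simp only [val_div_eq_val_div_iff]
    split_ifs <;> simp

lemma edgeInc_isCross_mul_sameSide_mul_transpose :
    edgeInc (IsCross m) * sameSide m * (edgeInc (IsCross m))ᵀ =
      (2 : ℝ) • of fun _ _ => 1 := by
  ext G G'
  obtain ⟨a, b, ha, hb, hG⟩ := exists_eq_pair_of_isCross G.1.2 G.2
  obtain ⟨a', b', ha', hb', hG'⟩ := exists_eq_pair_of_isCross G'.1.2 G'.2
  have hab : a < b := Fin.lt_def.2 (by omega)
  have hab' : a' < b' := Fin.lt_def.2 (by omega)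
  simp only [mul_apply, transpose_apply, edgeInc, of_apply, hG, hG']
  simp_rw [mul_comm _ (inc {a', b'} _), sum_inc_pair_mul hab', sum_inc_pair_mul hab]
  simp [sameSide, val_div_eq_val_div_iff, ha, ha', hb.not_gt, hb'.not_gt]
  norm_num

lemma edgeInc_isCross_mulVec_sideSign :
    edgeInc (IsCross m) *ᵥ sideSign (fun v : Fin (2 * m) => v.val < m) = fun _ => -2 := by
  ext G
  obtain ⟨a, b, ha, hb, hG⟩ := exists_eq_pair_of_isCross G.1.2 G.2
  simp only [mulVec, dotProduct, edgeInc, of_apply, hG]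
  rw [sum_inc_pair_mul (Fin.lt_def.2 (by omega))]
  simp [sideSign, ha, hb.not_gt]
  norm_num

lemma edgeInc_isCross_mul_transpose_mulVec_one :
    (edgeInc (IsCross m) * (edgeInc (IsCross m))ᵀ) *ᵥ (fun _ => 1) =
      fun _ => 2 * (m : ℝ) := by
  set B := edgeInc (IsCross m)
  set σ := sideSign fun v : Fin (2 * m) => v.val < m
  have hσ : (Bᵀ * B) *ᵥ σ = (2 * m : ℝ) • σ := by
    rw [edgeInc_isCross_transpose_mul_self, sub_mulVec, smul_mulVec, one_mulVec,
      crossAdj_mulVec_sideSign card_val_lt card_not_val_lt, ← sub_smul]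
    ring_nf
  have hone : (fun _ => (1 : ℝ)) = (-1 / 2 : ℝ) • (B *ᵥ σ) := by
    rw [edgeInc_isCross_mulVec_sideSign]
    ext
    norm_num
  rw [hone, mulVec_smul, mulVec_mulVec, Matrix.mul_assoc, ← mulVec_mulVec, hσ, mulVec_smul,
    edgeInc_isCross_mulVec_sideSign]
  ext
  simp only [Pi.smul_apply, smul_eq_mul]
  ring

lemma transpose_mul_self_edgeInc_isInner_mul_transpose :
    (edgeInc (IsInner m) * (edgeInc (IsCross m))ᵀ)ᵀ *
        (edgeInc (IsInner m) * (edgeInc (IsCross m))ᵀ) =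
      (m : ℝ) • (edgeInc (IsCross m) * (edgeInc (IsCross m))ᵀ) -
        (2 : ℝ) • of fun _ _ => 1 := by
  rw [transpose_mul, transpose_transpose, Matrix.mul_assoc, ← Matrix.mul_assoc _ (edgeInc _),
    edgeInc_isInner_transpose_mul_self, ← Matrix.mul_assoc, Matrix.mul_sub, Matrix.sub_mul,
    Matrix.mul_smul, Matrix.mul_one, Matrix.smul_mul, edgeInc_isCross_mul_sameSide_mul_transpose]

lemma finrank_eigenspace_edgeInc_isCross_mul_transpose {μ : ℝ} (hμ : μ ≠ 0) :
    Module.finrank ℝ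
        (Module.End.eigenspace (mulVecLin (edgeInc (IsCross m) * (edgeInc (IsCross m))ᵀ)) μ) =
      Module.finrank ℝ (Module.End.eigenspace
        (mulVecLin ((m : ℝ) • 1 - crossAdj fun v : Fin (2 * m) => v.val < m)) μ) := by
  rw [mulVecLin_mul, finrank_eigenspace_comp_comm _ _ hμ, ← mulVecLin_mul,
    edgeInc_isCross_transpose_mul_self]

end BipartiteLaplacian

/-- For the complete bipartite 2-complex `K²_{m,m}`, write the
up-Laplacian `L↑_1` in blocks according to the partition of the edges into inner edges
`X₁^in` and crossing edges `X₁^out`, as `[[m·I, −M],[−Mᵀ, 2m·I − N]]`. Then the inner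
block is indeed `m·I`, `MᵀM = m·N − 2·J`, and `N` has exactly two nonzero eigenvalues:
`2m` with multiplicity `1` (with the all-ones vector as eigenvector) and `m` with
multiplicity `2(m−1)`. -/
theorem bipartite_up_laplacian_blocks
    (m : ℕ) (hm : 1 ≤ m)
    (M : Matrix {F : KSet (Fin (2 * m)) 2 // ∀ v ∈ F.1, ∀ w ∈ F.1, v.val / m = w.val / m}
                {F : KSet (Fin (2 * m)) 2 // ¬ ∀ v ∈ F.1, ∀ w ∈ F.1, v.val / m = w.val / m} ℝ)
    (hM : ∀ F G, M F G = -(LupE (bipartite2 m) 2 F.1 G.1))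
    (N : Matrix {F : KSet (Fin (2 * m)) 2 // ¬ ∀ v ∈ F.1, ∀ w ∈ F.1, v.val / m = w.val / m}
                {F : KSet (Fin (2 * m)) 2 // ¬ ∀ v ∈ F.1, ∀ w ∈ F.1, v.val / m = w.val / m} ℝ)
    (hN : ∀ F G, N F G =
      (if F = G then 2 * (m : ℝ) else 0) - LupE (bipartite2 m) 2 F.1 G.1) :
    (∀ F F' : {F : KSet (Fin (2 * m)) 2 // ∀ v ∈ F.1, ∀ w ∈ F.1, v.val / m = w.val / m},
      LupE (bipartite2 m) 2 F.1 F'.1 = if F = F' then (m : ℝ) else 0) ∧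
    Mᵀ * M = (m : ℝ) • N - (2 : ℝ) • Matrix.of (fun _ _ => (1 : ℝ)) ∧
    N.mulVec (fun _ => 1) = (fun _ => 2 * (m : ℝ)) ∧
    Module.finrank ℝ
      (Module.End.eigenspace (Matrix.mulVecLin N) (2 * (m : ℝ))) = 1 ∧
    Module.finrank ℝ
      (Module.End.eigenspace (Matrix.mulVecLin N) ((m : ℝ))) = 2 * (m - 1) ∧
    (∀ μ : ℝ, μ ≠ 0 → Module.End.HasEigenvalue (Matrix.mulVecLin N) μ →
      μ = 2 * (m : ℝ) ∨ μ = (m : ℝ)) := by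
  have hm0 : m ≠ 0 := by omega
  have hN' : N = edgeInc (IsCross m) * (edgeInc (IsCross m))ᵀ := by
    ext F G
    rw [hN, edgeInc_isCross_mul_transpose_apply]
  have hM' : M = edgeInc (IsInner m) * (edgeInc (IsCross m))ᵀ := by
    ext F G
    rw [hM, edgeInc_isInner_mul_transpose_apply]
  refine ⟨fun F F' => (LupE_bipartite2_of_isInner F.2 F'.2).trans (by simp [Subtype.ext_iff]),
    hM' ▸ hN' ▸ transpose_mul_self_edgeInc_isInner_mul_transpose,
    hN' ▸ edgeInc_isCross_mul_transpose_mulVec_one, ?_, ?_, fun μ hμ hev => ?_⟩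
  · rw [hN', finrank_eigenspace_edgeInc_isCross_mul_transpose (by simp [hm0]),
      finrank_eigenspace_smul_one_sub_crossAdj_two_mul card_val_lt card_not_val_lt hm0]
  · rw [hN', finrank_eigenspace_edgeInc_isCross_mul_transpose (by simp [hm0]),
      finrank_eigenspace_smul_one_sub_crossAdj_self card_val_lt card_not_val_lt hm0]
  · rw [hN', mulVecLin_mul] at hev
    have hev' := hasEigenvalue_comp_comm _ _ hμ hev
    rw [← mulVecLin_mul, edgeInc_isCross_transpose_mul_self] at hev'
    rcases eigenvalue_smul_one_sub_crossAdj card_val_lt card_not_val_lt hev' with h | h | h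
    exacts [absurd h hμ, Or.inr h, Or.inl h]
end
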